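/- arXiv:1411.1596 — 5 statements merged into one kernel-verified Lean document; each statement's English description precedes it below -/
import Mathlib

section
/- Let a < b be real numbers, let α ∈ (1,2), and let f : ℝ → ℝ be bounded, (b−a)-periodic, satisfy ∫_a^b f(s) ds = 0, and be continuous at every point not of the form a + k(b−a) with k ∈ ℤ. Then for every x ∈ ℝ the improper integral lim_{T→∞} ∫_x^T f(s)·(s−x)^{1−α} ds exists and is finite, and likewise the improper integral lim_{T→∞} ∫_{−T}^x f(s)·(x−s)^{1−α} ds exists and is finite. -/
/-!
The primitive `F t = ∫ s in x..t, f s` of a zero-mean periodic function is periodic and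
continuous, hence bounded. Away from the singularity of the kernel, integration by parts turns
`∫ s in x+1..T, f s * (s - x) ^ p` into
`F T * (T - x) ^ p - F (x + 1) - p * ∫ s in x+1..T, F s * (s - x) ^ (p - 1)`; for `p < 0` the
boundary term tends to `0` and the last integral converges absolutely (Dirichlet's test). For
`p > -1` the kernel is integrable near `s = x`. The left-sided integral is the right-sided one
of `s ↦ f (-s)`.
-/

open Filter Topology intervalIntegral MeasureTheory Set Function

theorem aestronglyMeasurable_of_countable_setOf_not_continuousAt {α β : Type*}
    [TopologicalSpace α] [MeasurableSpace α] [OpensMeasurableSpace α]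
    [MeasurableSingletonClass α] [TopologicalSpace β] [TopologicalSpace.PseudoMetrizableSpace β]
    [SecondCountableTopologyEither α β] {μ : Measure α} [NullSingletonClass μ] {f : α → β}
    (hf : {x | ¬ContinuousAt f x}.Countable) :
    AEStronglyMeasurable f μ := by
  have hcont : ContinuousOn f {x | ¬ContinuousAt f x}ᶜ := fun x hx =>
    (not_not.1 hx).continuousWithinAt
  have hae : ∀ᵐ x ∂μ, x ∈ {x | ¬ContinuousAt f x}ᶜ :=
    (measure_eq_zero_iff_ae_notMem).1 (hf.measure_zero μ)
  simpa [Measure.restrict_eq_self_of_ae_mem hae] using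
    hcont.aestronglyMeasurable (μ := μ) hf.measurableSet.compl

theorem integral_mul_eq_sub_sub_of_hasDerivAt_off_countable {f F g g' : ℝ → ℝ} {c T : ℝ}
    {D : Set ℝ} (hcT : c ≤ T) (hD : D.Countable) (hF : ContinuousOn F (Icc c T))
    (hg : ContinuousOn g (Icc c T)) (hFf : ∀ s ∈ Ioo c T \ D, HasDerivAt F (f s) s)
    (hgg' : ∀ s ∈ Ioo c T \ D, HasDerivAt g (g' s) s) (hf : IntervalIntegrable f volume c T)
    (hg' : IntervalIntegrable g' volume c T) :
    ∫ s in c..T, f s * g s = F T * g T - F c * g c - ∫ s in c..T, F s * g' s := by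
  rw [← uIcc_of_le hcT] at hF hg
  have hfg : IntervalIntegrable (fun s => f s * g s) volume c T := hf.mul_continuousOn hg
  have hFg' : IntervalIntegrable (fun s => F s * g' s) volume c T := hg'.continuousOn_mul hF
  have hFTC := integral_eq_of_hasDerivAt_off_countable_of_le (fun s => F s * g s)
    (fun s => f s * g s + F s * g' s) hcT hD (uIcc_of_le hcT ▸ hF.mul hg)
    (fun s hs => (hFf s hs).mul (hgg' s hs)) (hfg.add hFg')
  rw [integral_add hfg hFg'] at hFTC
  linarith

theorem exists_tendsto_integral_mul_of_bounded_primitive {f F g g' : ℝ → ℝ} {c : ℝ}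
    {D : Set ℝ} (hD : D.Countable) (hF : Continuous F) (hFbdd : ∃ C, ∀ t, |F t| ≤ C)
    (hFf : ∀ s ∉ D, HasDerivAt F (f s) s) (hf : ∀ T, IntervalIntegrable f volume c T)
    (hgg' : ∀ s ∈ Ici c, HasDerivAt g (g' s) s) (hg' : IntegrableOn g' (Ioi c))
    (hg : Tendsto g atTop (𝓝 0)) :
    ∃ L, Tendsto (fun T => ∫ s in c..T, f s * g s) atTop (𝓝 L) := by
  obtain ⟨C, hC⟩ := hFbdd
  have hFg' : IntegrableOn (fun s => F s * g' s) (Ioi c) :=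
    hg'.bdd_mul hF.aestronglyMeasurable (ae_of_all _ hC)
  have hparts : ∀ T ≥ c,
      ∫ s in c..T, f s * g s = F T * g T - F c * g c - ∫ s in c..T, F s * g' s := by
    intro T hcT
    refine integral_mul_eq_sub_sub_of_hasDerivAt_off_countable hcT hD hF.continuousOn
      (fun s hs => (hgg' s hs.1).continuousAt.continuousWithinAt)
      (fun s hs => hFf s hs.2) (fun s hs => hgg' s (Ioo_subset_Icc_self hs.1).1) (hf T) ?_
    exact (intervalIntegrable_iff_integrableOn_Ioc_of_le hcT).2 (hg'.mono_set Ioc_subset_Ioi_self)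
  have hboundary : Tendsto (fun T => F T * g T) atTop (𝓝 0) :=
    isBoundedUnder_le_mul_tendsto_zero ⟨C, eventually_map.2 (Eventually.of_forall hC)⟩ hg
  refine ⟨0 - F c * g c - ∫ s in Ioi c, F s * g' s, ?_⟩
  refine ((hboundary.sub_const _).sub
    (intervalIntegral_tendsto_integral_Ioi c hFg' tendsto_id)).congr' ?_
  filter_upwards [eventually_ge_atTop c] with T hT using (hparts T hT).symm

section RpowSub

variable {x p : ℝ}

theorem hasDerivAt_rpow_sub {s : ℝ} (hxs : x < s) :
    HasDerivAt (fun s => (s - x) ^ p) (p * (s - x) ^ (p - 1)) s := by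
  simpa using ((hasDerivAt_id s).sub_const x).rpow_const (p := p) (Or.inl (sub_pos.2 hxs).ne')

theorem integrableOn_Ioi_rpow_sub {c : ℝ} (hp : p < -1) (hxc : x < c) :
    IntegrableOn (fun s => (s - x) ^ p) (Ioi c) := by
  simpa [← sub_eq_add_neg] using integrableOn_add_rpow_Ioi_of_lt (m := -x) hp (by simpa)

theorem intervalIntegrable_rpow_sub (hp : -1 < p) (a b : ℝ) :
    IntervalIntegrable (fun s => (s - x) ^ p) volume a b := by
  simpa using
    (intervalIntegral.intervalIntegrable_rpow' (a := a - x) (b := b - x) hp).comp_sub_right x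

theorem tendsto_rpow_sub_atTop_zero (hp : p < 0) :
    Tendsto (fun s => (s - x) ^ p) atTop (𝓝 0) := by
  simpa [Function.comp_def, ← sub_eq_add_neg] using
    (tendsto_rpow_neg_atTop (neg_pos.2 hp)).comp (tendsto_atTop_add_const_right _ (-x) tendsto_id)

end RpowSub

/-- The class `C_I(ℝ)` of the paper, with the regularity assumed of `f`. -/
structure IsBoundedZeroMeanPeriodic (f : ℝ → ℝ) (P : ℝ) : Prop where
  bounded : ∃ M, ∀ s, |f s| ≤ M
  periodic : Periodic f P
  period_ne_zero : P ≠ 0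
  integral_period_eq_zero : ∫ s in 0..P, f s = 0
  countable_setOf_not_continuousAt : {s | ¬ContinuousAt f s}.Countable

namespace IsBoundedZeroMeanPeriodic

variable {f : ℝ → ℝ} {P : ℝ}

theorem aestronglyMeasurable (hf : IsBoundedZeroMeanPeriodic f P) :
    AEStronglyMeasurable f volume :=
  aestronglyMeasurable_of_countable_setOf_not_continuousAt hf.countable_setOf_not_continuousAt

theorem intervalIntegrable (hf : IsBoundedZeroMeanPeriodic f P) (a b : ℝ) :
    IntervalIntegrable f volume a b := by
  obtain ⟨M, hM⟩ := hf.bounded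
  rw [intervalIntegrable_iff]
  exact IntegrableOn.of_bound measure_Ioc_lt_top hf.aestronglyMeasurable.restrict M
    (ae_of_all _ hM)

theorem periodic_primitive (hf : IsBoundedZeroMeanPeriodic f P) (x : ℝ) :
    Periodic (fun t => ∫ s in x..t, f s) P := by
  intro t
  dsimp only
  rw [hf.periodic.intervalIntegral_add_eq_add x t hf.intervalIntegrable,
    hf.periodic.intervalIntegral_add_eq x 0, zero_add, hf.integral_period_eq_zero, add_zero]

theorem exists_abs_primitive_le (hf : IsBoundedZeroMeanPeriodic f P) (x : ℝ) :
    ∃ C, ∀ t, |∫ s in x..t, f s| ≤ C := by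
  obtain ⟨C, hC⟩ := isBounded_iff_forall_norm_le.1 <|
    (hf.periodic_primitive x).isBounded_of_continuous hf.period_ne_zero
      (continuous_primitive hf.intervalIntegrable x)
  exact ⟨C, fun t => hC _ ⟨t, rfl⟩⟩

theorem hasDerivAt_primitive (hf : IsBoundedZeroMeanPeriodic f P) (x : ℝ) {t : ℝ}
    (ht : ContinuousAt f t) : HasDerivAt (fun t => ∫ s in x..t, f s) (f t) t :=
  integral_hasDerivAt_right (hf.intervalIntegrable x t)
    hf.aestronglyMeasurable.stronglyMeasurableAtFilter ht

theorem comp_neg (hf : IsBoundedZeroMeanPeriodic f P) :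
    IsBoundedZeroMeanPeriodic (fun s => f (-s)) P where
  bounded := hf.bounded.imp fun _ hM s => hM (-s)
  periodic s := by
    show f (-(s + P)) = f (-s)
    rw [neg_add', hf.periodic.sub_eq]
  period_ne_zero := hf.period_ne_zero
  integral_period_eq_zero := by
    have hshift := hf.periodic.intervalIntegral_add_eq (-P) 0
    rw [neg_add_cancel, zero_add] at hshift
    rw [integral_comp_neg, neg_zero, hshift, hf.integral_period_eq_zero]
  countable_setOf_not_continuousAt := by
    refine (hf.countable_setOf_not_continuousAt.preimage neg_injective).mono ?_
    intro s hs hcont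
    exact hs (ContinuousAt.comp (g := f) hcont continuous_neg.continuousAt)

theorem exists_tendsto_integral_mul_rpow_sub (hf : IsBoundedZeroMeanPeriodic f P) {p : ℝ}
    (hp : p ∈ Ioo (-1) 0) (x : ℝ) :
    ∃ L, Tendsto (fun T => ∫ s in x..T, f s * (s - x) ^ p) atTop (𝓝 L) := by
  obtain ⟨M, hM⟩ := hf.bounded
  have hnear : IntervalIntegrable (fun s => f s * (s - x) ^ p) volume x (x + 1) :=
    intervalIntegrable_iff.2 <|
      (intervalIntegrable_iff.1 (intervalIntegrable_rpow_sub hp.1 x (x + 1))).bdd_mul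
        hf.aestronglyMeasurable.restrict (ae_of_all _ hM)
  obtain ⟨L, hL⟩ := exists_tendsto_integral_mul_of_bounded_primitive
    hf.countable_setOf_not_continuousAt (continuous_primitive hf.intervalIntegrable x)
    (hf.exists_abs_primitive_le x) (fun t ht => hf.hasDerivAt_primitive x (not_not.1 ht))
    (fun T => hf.intervalIntegrable (x + 1) T)
    (fun s hs => hasDerivAt_rpow_sub ((lt_add_one x).trans_le hs))
    ((integrableOn_Ioi_rpow_sub (by linarith [hp.2]) (lt_add_one x)).const_mul p)
    (tendsto_rpow_sub_atTop_zero hp.2)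
  refine ⟨(∫ s in x..x + 1, f s * (s - x) ^ p) + L, (hL.const_add _).congr' ?_⟩
  filter_upwards [eventually_ge_atTop (x + 1)] with T hT
  refine integral_add_adjacent_intervals hnear ?_
  refine (hf.intervalIntegrable _ _).mul_continuousOn fun s hs => ?_
  rw [uIcc_of_le hT] at hs
  exact (hasDerivAt_rpow_sub ((lt_add_one x).trans_le hs.1)).continuousAt.continuousWithinAt

theorem exists_tendsto_integral_neg_mul_rpow_sub (hf : IsBoundedZeroMeanPeriodic f P) {p : ℝ}
    (hp : p ∈ Ioo (-1) 0) (x : ℝ) :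
    ∃ L, Tendsto (fun T => ∫ s in (-T)..x, f s * (x - s) ^ p) atTop (𝓝 L) := by
  obtain ⟨L, hL⟩ := hf.comp_neg.exists_tendsto_integral_mul_rpow_sub hp (-x)
  refine ⟨L, hL.congr fun T => ?_⟩
  simpa [sub_eq_neg_add, add_comm] using
    integral_comp_neg (a := -x) (b := T) (fun s => f s * (x - s) ^ p)

end IsBoundedZeroMeanPeriodic

/-- For `a < b`, `α ∈ (1,2)` and `f : ℝ → ℝ` bounded, `(b-a)`-periodic, with
zero mean on `[a,b]` and continuous away from the points `a + k(b-a)`, both improper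
fractional integrals of order `2-α` of `f` exist (as finite limits) at every `x`. -/
theorem fractional_integrals_exist
    (a b α : ℝ) (hab : a < b) (hα : α ∈ Set.Ioo (1 : ℝ) 2)
    (f : ℝ → ℝ)
    (hbd : ∃ M, ∀ x, |f x| ≤ M)
    (hper : ∀ x, f (x + (b - a)) = f x)
    (hmean : (∫ s in a..b, f s) = 0)
    (hcont : ∀ x, (∀ k : ℤ, x ≠ a + k * (b - a)) → ContinuousAt f x) :
    ∀ x : ℝ,
      (∃ L : ℝ, Tendsto (fun T => ∫ s in x..T, f s * (s - x) ^ (1 - α)) atTop (𝓝 L)) ∧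
      (∃ L : ℝ, Tendsto (fun T => ∫ s in (-T)..x, f s * (x - s) ^ (1 - α)) atTop (𝓝 L)) := by
  have hmean' : ∫ s in 0..b - a, f s = 0 := by
    have hshift := Periodic.intervalIntegral_add_eq hper a 0
    rw [add_sub_cancel, zero_add] at hshift
    rw [← hshift, hmean]
  have hdisc : {s | ¬ContinuousAt f s}.Countable := by
    refine (countable_range fun k : ℤ => a + k * (b - a)).mono fun s hs => ?_
    by_contra hs'
    exact hs (hcont s fun k hk => hs' ⟨k, hk.symm⟩)
  have hf : IsBoundedZeroMeanPeriodic f (b - a) :=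
    ⟨hbd, hper, (sub_pos.2 hab).ne', hmean', hdisc⟩
  have hp : 1 - α ∈ Ioo (-1) 0 := ⟨by linarith [hα.2], by linarith [hα.1]⟩
  exact fun x => ⟨hf.exists_tendsto_integral_mul_rpow_sub hp x,
    hf.exists_tendsto_integral_neg_mul_rpow_sub hp x⟩
end

section
/- For each k ∈ {0,1,…,N}, the vector v^k = (cos(k·x_0), cos(k·x_1), …, cos(k·x_N)) ∈ ℝ^{N+1} is an eigenvector of the matrix A_{α,h}: A_{α,h}·v^k = λ_k·v^k, where λ_k = −(σ/cos(απ/2))·(2/h)^α·(sin(kπh/2))^α·cos( kπh + (α/2)(π − kπh) ). -/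
/-!
The Grünwald–Letnikov coefficients `g_n(α)` are the Taylor coefficients of `(1 - z)^α`. For
`1 ≤ α ≤ 2` they are nonnegative from `n = 2` on and their partial sums `∑_{n ≤ M} g_n(α)` equal
`g_M(α - 1) ∈ [-1, 1]`, so they are absolutely summable and, by Abel's theorem,
`∑ g_n w^n = (1 - w)^α` on the whole closed unit disc.

The Neumann extension of `v^k` is `j ↦ cos(kπh(j + 1/2))` on all of `ℤ`, so the `n`-th term of
`[A v^k]_j` is `2 g_n cos(k x_j) cos((n - 1)β)` with `β = kπh`, and the series sums to
`2 cos(k x_j) Re(e^{-iβ} (1 - e^{iβ})^α)`. The polar form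
`1 - e^{iβ} = 2 sin(β/2) e^{i(β - π)/2}` turns this into the eigenvalue.
-/

/-- The Grünwald--Letnikov coefficients `g_k(α) = (-1)^k C(α,k)`, where
`C(α,k) = α(α-1)⋯(α-k+1)/k!` is the generalized binomial coefficient. -/
noncomputable def glCoeff (α : ℝ) (k : ℕ) : ℝ :=
  (-1 : ℝ) ^ k * ((∏ i ∈ Finset.range k, (α - i)) / (Nat.factorial k))

/-- The Neumann extension `v̂ : ℤ → ℝ` of a vector `v = (v_0, …, v_N) ∈ ℝ^{N+1}`:
`v̂_j = v_j` for `0 ≤ j ≤ N`, `v̂_{-1-j} = v̂_j`, and `v̂_{j+2(N+1)} = v̂_j`. -/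
def neumannExt (N : ℕ) (v : Fin (N + 1) → ℝ) (j : ℤ) : ℝ :=
  if h : (j % (2 * (N + 1))).toNat ≤ N then
    v ⟨(j % (2 * (N + 1))).toNat, Nat.lt_succ_of_le h⟩
  else
    v ⟨2 * N + 1 - (j % (2 * (N + 1))).toNat, by
      have h2 : j % (2 * (N + 1)) < 2 * (N + 1) := Int.emod_lt_of_pos j (by positivity)
      omega⟩

/-- The mesh size `h = 1/(N+1)`. -/
noncomputable def gridH (N : ℕ) : ℝ := 1 / ((N : ℝ) + 1)

/-- The grid points `x_j = π h (j + 1/2)`, `h = 1/(N+1)`. -/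
noncomputable def gridX (N : ℕ) (j : ℕ) : ℝ := Real.pi * gridH N * ((j : ℝ) + 1 / 2)

/-- The action of the Grünwald--Letnikov discretization matrix `A_{α,h}` (with `h = 1/(N+1)`
and `C_σ = -σ/(2 cos(απ/2))`) on a vector `v ∈ ℝ^{N+1}` via the Neumann extension:
`[A_{α,h} v]_j = (C_σ/h^α) Σ_{k=0}^∞ g_k(α) (v̂_{j+1-k} + v̂_{j-1+k})`. -/
noncomputable def Amul (α σ : ℝ) (N : ℕ) (v : Fin (N + 1) → ℝ) (j : Fin (N + 1)) : ℝ :=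
  (-σ / (2 * Real.cos (α * Real.pi / 2)) / gridH N ^ α) *
    ∑' k : ℕ, glCoeff α k *
      (neumannExt N v ((j : ℤ) + 1 - (k : ℤ)) + neumannExt N v ((j : ℤ) - 1 + (k : ℤ)))

/-- The matrix `A_{α,h} ∈ ℝ^{(N+1)×(N+1)}`, whose `m`-th column is the action of the
discretized operator on the `m`-th standard basis vector. -/
noncomputable def Amat (α σ : ℝ) (N : ℕ) : Matrix (Fin (N + 1)) (Fin (N + 1)) ℝ :=
  Matrix.of fun j m => Amul α σ N (fun i => if i = m then 1 else 0) j

/-- The eigenvalues `λ_k = -(σ/cos(απ/2)) (2/h)^α (sin(kπh/2))^α cos(kπh + (α/2)(π - kπh))`. -/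
noncomputable def eigVal (α σ : ℝ) (N : ℕ) (k : ℕ) : ℝ :=
  -(σ / Real.cos (α * Real.pi / 2)) * (2 / gridH N) ^ α *
    Real.sin ((k : ℝ) * Real.pi * gridH N / 2) ^ α *
    Real.cos ((k : ℝ) * Real.pi * gridH N + α / 2 * (Real.pi - (k : ℝ) * Real.pi * gridH N))

open Finset Filter Topology
open scoped Real

namespace glCoeff

theorem eq_neg_one_pow_mul_choose (α : ℝ) (n : ℕ) :
    glCoeff α n = (-1) ^ n * Ring.choose α n := by
  rw [glCoeff, Ring.choose_eq_smul, ← Polynomial.aeval_eq_smeval, Polynomial.aeval_def,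
    Polynomial.eval₂_eq_eval_map, descPochhammer_map, descPochhammer_eval_eq_prod_range,
    smul_eq_mul, inv_mul_eq_div]

@[simp] theorem zero (α : ℝ) : glCoeff α 0 = 1 := by simp [glCoeff]

@[simp] theorem one (α : ℝ) : glCoeff α 1 = -α := by simp [glCoeff]

theorem succ (α : ℝ) (n : ℕ) : glCoeff α (n + 1) = glCoeff α n * ((n - α) / (n + 1)) := by
  unfold glCoeff
  rw [prod_range_succ, Nat.factorial_succ, pow_succ]
  push_cast
  field_simp
  ring

theorem sum_range_succ_eq_sub_one (α : ℝ) (M : ℕ) :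
    ∑ n ∈ range (M + 1), glCoeff α n = glCoeff (α - 1) M := by
  induction M with
  | zero => simp
  | succ M ih =>
    have pascal := Ring.choose_succ_succ (α - 1) M
    rw [sub_add_cancel] at pascal
    rw [sum_range_succ, ih, eq_neg_one_pow_mul_choose, eq_neg_one_pow_mul_choose,
      eq_neg_one_pow_mul_choose, pascal, pow_succ]
    ring

theorem abs_le_one {α : ℝ} (hα : |α| ≤ 1) (n : ℕ) : |glCoeff α n| ≤ 1 := by
  induction n with
  | zero => simp
  | succ n ih =>
    have hratio : |((n : ℝ) - α) / (n + 1)| ≤ 1 := by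
      rw [abs_div, abs_of_pos (by positivity : (0 : ℝ) < n + 1), div_le_one (by positivity),
        abs_le]
      constructor <;> linarith [abs_le.mp hα]
    rw [succ, abs_mul]
    exact mul_le_one₀ ih (abs_nonneg _) hratio

theorem nonneg {α : ℝ} (h₁ : 1 ≤ α) (h₂ : α ≤ 2) {n : ℕ} (hn : 2 ≤ n) : 0 ≤ glCoeff α n := by
  induction n, hn using Nat.le_induction with
  | base =>
    rw [succ, one, Nat.cast_one]
    nlinarith
  | succ n hn ih =>
    rw [succ]
    have : (2 : ℝ) ≤ n := by exact_mod_cast hn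
    exact mul_nonneg ih (div_nonneg (by linarith) (by linarith))

theorem summable_abs {α : ℝ} (h₁ : 1 ≤ α) (h₂ : α ≤ 2) : Summable fun n ↦ |glCoeff α n| := by
  rw [← summable_nat_add_iff 2]
  refine summable_of_sum_range_le (c := α) (fun n ↦ abs_nonneg _) fun M ↦ ?_
  have hpartial := sum_range_succ_eq_sub_one α (M + 1)
  rw [sum_range_succ' _ (M + 1), sum_range_succ'] at hpartial
  have htail : ∑ n ∈ range M, |glCoeff α (n + 2)| = ∑ n ∈ range M, glCoeff α (n + 2) :=
    sum_congr rfl fun n _ ↦ abs_of_nonneg (nonneg h₁ h₂ (by omega))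
  have hbound : glCoeff (α - 1) (M + 1) ≤ 1 :=
    (abs_le.mp (abs_le_one (abs_le.mpr ⟨by linarith, by linarith⟩) _)).2
  rw [zero_add, one, zero] at hpartial
  linarith

end glCoeff

section

open Complex

theorem hasSum_glCoeff_mul_pow_of_norm_lt_one (α : ℝ) {z : ℂ} (hz : ‖z‖ < 1) :
    HasSum (fun n ↦ (glCoeff α n : ℂ) * z ^ n) ((1 - z) ^ (α : ℂ)) := by
  have hball : -z ∈ Metric.eball (0 : ℂ) 1 := by
    rw [← ENNReal.ofReal_one, Metric.eball_ofReal]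
    simpa using hz
  have hbinom := one_add_cpow_hasFPowerSeriesOnBall_zero (a := α) |>.hasSum hball
  rw [zero_add, ← sub_eq_add_neg] at hbinom
  convert hbinom using 1
  · rfl
  funext n
  simp only [binomialSeries_apply, List.ofFn_const, List.prod_replicate, smul_eq_mul]
  rw [glCoeff.eq_neg_one_pow_mul_choose, ← ofReal_choose, neg_pow]
  push_cast
  ring

theorem hasSum_glCoeff_mul_pow {α : ℝ} (h₁ : 1 ≤ α) (h₂ : α ≤ 2) {z : ℂ} (hz : ‖z‖ ≤ 1) :
    HasSum (fun n ↦ (glCoeff α n : ℂ) * z ^ n) ((1 - z) ^ (α : ℂ)) := by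
  have hsum : Summable fun n ↦ (glCoeff α n : ℂ) * z ^ n := by
    refine .of_norm_bounded (glCoeff.summable_abs h₁ h₂) fun n ↦ ?_
    rw [norm_mul, norm_pow, norm_real, Real.norm_eq_abs]
    exact mul_le_of_le_one_right (abs_nonneg _) (pow_le_one₀ (norm_nonneg z) hz)
  have habel := tendsto_tsum_powerSeries_nhdsWithin_lt hsum.hasSum.tendsto_sum_nat
  rw [tendsto_map'_iff] at habel
  have hradial : ∀ᶠ r : ℝ in 𝓝[<] 1,
      ∑' n, (glCoeff α n : ℂ) * z ^ n * (r : ℂ) ^ n = (1 - r * z) ^ (α : ℂ) := by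
    filter_upwards [Ioo_mem_nhdsLT (show (0 : ℝ) < 1 by norm_num)] with r hr
    have hrz : ‖(r : ℂ) * z‖ < 1 := by
      rw [norm_mul, norm_real, Real.norm_of_nonneg hr.1.le]
      exact lt_of_le_of_lt (mul_le_of_le_one_right hr.1.le hz) hr.2
    rw [← (hasSum_glCoeff_mul_pow_of_norm_lt_one α hrz).tsum_eq]
    exact tsum_congr fun n ↦ by ring
  -- `Re (1 - z) ≥ 0` and `Re α > 0` keep `x ↦ x ^ α` continuous at `1 - z`, even when `z = 1`.
  have hcont : ContinuousAt (fun r : ℝ ↦ (1 - r * z) ^ (α : ℂ)) 1 := by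
    refine (continuousAt_cpow_const_of_re_pos (Or.inl ?_) ?_).comp (by fun_prop)
    · simpa using (re_le_norm z).trans hz
    · simp only [ofReal_re]; linarith
  have hlim := tendsto_nhds_unique (habel.congr' hradial)
    (hcont.tendsto.mono_left nhdsWithin_le_nhds)
  simpa [hlim] using hsum.hasSum

theorem hasSum_glCoeff_mul_cos {α : ℝ} (h₁ : 1 ≤ α) (h₂ : α ≤ 2) (β : ℝ) :
    HasSum (fun n : ℕ ↦ glCoeff α n * Real.cos ((n - 1) * β))
      (exp (-β * I) * (1 - exp (β * I)) ^ (α : ℂ)).re := by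
  have hw : ‖exp (β * I)‖ ≤ 1 := (norm_exp_ofReal_mul_I β).le
  convert hasSum_re ((hasSum_glCoeff_mul_pow h₁ h₂ hw).mul_left (exp (-β * I))) using 1
  funext n
  rw [← exp_nat_mul, mul_left_comm, ← exp_add, re_ofReal_mul,
    show -(β : ℂ) * I + n * (β * I) = ((n - 1) * β : ℝ) * I by push_cast; ring,
    exp_ofReal_mul_I_re]

theorem one_sub_exp_mul_I (β : ℝ) :
    1 - exp (β * I) = (2 * Real.sin (β / 2) : ℝ) * exp (((β - π) / 2 : ℝ) * I) := by
  have hcos : Real.cos ((β - π) / 2) = Real.sin (β / 2) := by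
    rw [show (β - π) / 2 = β / 2 - π / 2 by ring, Real.cos_sub_pi_div_two]
  have hsin : Real.sin ((β - π) / 2) = -Real.cos (β / 2) := by
    rw [show (β - π) / 2 = β / 2 - π / 2 by ring, Real.sin_sub_pi_div_two]
  have hβ : β = 2 * (β / 2) := by ring
  apply Complex.ext
  · rw [sub_re, one_re, exp_ofReal_mul_I_re, re_ofReal_mul, exp_ofReal_mul_I_re, hcos, hβ,
      Real.cos_two_mul, Real.cos_sq']
    ring_nf
  · rw [sub_im, one_im, exp_ofReal_mul_I_im, im_ofReal_mul, exp_ofReal_mul_I_im, hsin, hβ,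
      Real.sin_two_mul]
    ring_nf

theorem re_exp_neg_mul_I_mul_cpow (x : ℂ) (α β : ℝ) :
    (exp (-β * I) * x ^ (α : ℂ)).re = ‖x‖ ^ α * Real.cos (arg x * α - β) := by
  rw [cpow_ofReal, ← ofReal_neg, exp_mul_I, ← ofReal_cos, ← ofReal_sin]
  simp only [mul_re, add_re, add_im, mul_im, ofReal_re, ofReal_im, I_re, I_im, Real.cos_neg,
    Real.sin_neg, Real.cos_sub]
  ring

theorem tsum_glCoeff_mul_cos {α β : ℝ} (h₁ : 1 ≤ α) (h₂ : α ≤ 2) (hβ₀ : 0 ≤ β)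
    (hβ : β ≤ 2 * π) :
    ∑' n : ℕ, glCoeff α n * Real.cos ((n - 1) * β)
      = (2 * Real.sin (β / 2)) ^ α * Real.cos (β + α / 2 * (π - β)) := by
  have hr : 0 ≤ 2 * Real.sin (β / 2) :=
    mul_nonneg zero_le_two (Real.sin_nonneg_of_nonneg_of_le_pi (by linarith) (by linarith))
  rw [(hasSum_glCoeff_mul_cos h₁ h₂ β).tsum_eq, re_exp_neg_mul_I_mul_cpow, one_sub_exp_mul_I,
    norm_mul, norm_exp_ofReal_mul_I, mul_one, norm_real, Real.norm_of_nonneg hr]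
  rcases hr.eq_or_lt with hr₀ | hr₀
  · rw [← hr₀, Real.zero_rpow (by linarith), zero_mul, zero_mul]
  · have hθ : (β - π) / 2 ∈ Set.Ioc (-π) π := ⟨by linarith [Real.pi_pos], by linarith⟩
    rw [arg_real_mul _ hr₀, exp_mul_I, arg_cos_add_sin_mul_I hθ,
      show (β - π) / 2 * α - β = -(β + α / 2 * (π - β)) by ring, Real.cos_neg]

end

theorem neumannExt_eq_of_periodic {N : ℕ} {f : ℤ → ℝ} (hper : Function.Periodic f (2 * (N + 1)))
    (hsymm : ∀ j, f (-1 - j) = f j) (j : ℤ) : neumannExt N (fun i ↦ f i) j = f j := by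
  have hm : (0 : ℤ) < 2 * (N + 1) := by positivity
  have hr₀ := Int.emod_nonneg j hm.ne'
  have hr₁ := Int.emod_lt_of_pos j hm
  have hmod : f (j % (2 * (N + 1))) = f j := by
    have := hper.int_mul (j / (2 * (N + 1))) (j % (2 * (N + 1)))
    rw [Int.cast_id, add_comm, mul_comm, Int.mul_ediv_add_emod] at this
    exact this.symm
  rw [← hmod, neumannExt]
  split_ifs with hr
  · simp only [Int.toNat_of_nonneg hr₀]
  · have hreflect : ((2 * N + 1 - (j % (2 * (N + 1))).toNat : ℕ) : ℤ)
        = -1 - (j % (2 * (N + 1)) - 2 * (N + 1)) := by omega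
    simp only [hreflect, hsymm, hper.sub_eq]

theorem gridH_mul_succ (N : ℕ) : gridH N * (N + 1) = 1 := by
  unfold gridH
  field_simp

theorem neumannExt_cos (N k : ℕ) (j : ℤ) :
    neumannExt N (fun i ↦ Real.cos (k * gridX N i)) j
      = Real.cos (k * (π * gridH N * (j + 1 / 2))) := by
  let f (j : ℤ) : ℝ := Real.cos (k * (π * gridH N * (j + 1 / 2)))
  have hper : Function.Periodic f (2 * (N + 1)) := fun j ↦ by
    have hshift : k * (π * gridH N * (((j + 2 * (N + 1) : ℤ) : ℝ) + 1 / 2))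
        = k * (π * gridH N * (j + 1 / 2)) + k * (2 * π) := by
      push_cast
      linear_combination (2 * k * π) * gridH_mul_succ N
    simp only [f, hshift, Real.cos_add_nat_mul_two_pi]
  have hsymm (j : ℤ) : f (-1 - j) = f j := by
    simp only [f, ← Real.cos_neg (k * (π * gridH N * (j + 1 / 2)))]
    congr 1
    push_cast
    ring
  simpa [f, gridX] using neumannExt_eq_of_periodic hper hsymm j

theorem neumannExt_cos_add_neumannExt_cos (N k : ℕ) (j : Fin (N + 1)) (n : ℕ) :
    neumannExt N (fun i ↦ Real.cos (k * gridX N i)) (j + 1 - n)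
        + neumannExt N (fun i ↦ Real.cos (k * gridX N i)) (j - 1 + n)
      = 2 * Real.cos (k * gridX N j) * Real.cos ((n - 1) * (k * π * gridH N)) := by
  rw [neumannExt_cos, neumannExt_cos, add_comm, Real.cos_add_cos, gridX]
  congr 3 <;> push_cast <;> ring

theorem Amat_eigenvector_general (α σ : ℝ) (hα : α ∈ Set.Ioc (1 : ℝ) 2)
    (N : ℕ) (k : ℕ) (hk : k ≤ N) :
    ∀ j : Fin (N + 1),
      Amul α σ N (fun i => Real.cos ((k : ℝ) * gridX N i)) j =
        eigVal α σ N k * Real.cos ((k : ℝ) * gridX N j) := by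
  intro j
  have hh : 0 < gridH N := by unfold gridH; positivity
  have hβ₀ : 0 ≤ k * π * gridH N := by positivity
  have hβ : k * π * gridH N ≤ 2 * π := by
    have hkN : (k : ℝ) ≤ N + 1 := by exact_mod_cast hk.trans N.le_succ
    calc k * π * gridH N ≤ (N + 1) * π * gridH N := by gcongr
      _ = π := by linear_combination π * gridH_mul_succ N
      _ ≤ 2 * π := by linarith [Real.pi_pos]
  have hsin : 0 ≤ Real.sin (k * π * gridH N / 2) :=
    Real.sin_nonneg_of_nonneg_of_le_pi (by linarith) (by linarith)
  simp only [Amul, neumannExt_cos_add_neumannExt_cos, mul_left_comm (glCoeff α _), tsum_mul_left,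
    tsum_glCoeff_mul_cos hα.1.le hα.2 hβ₀ hβ, eigVal, Real.mul_rpow zero_le_two hsin,
    Real.div_rpow zero_le_two hh.le]
  ring

/-- For `k = 0,…,N`, the vector `v^k = (cos(k x_0), …, cos(k x_N))` is an
eigenvector of `A_{α,h}` with eigenvalue
`λ_k = -(σ/cos(απ/2)) (2/h)^α (sin(kπh/2))^α cos(kπh + (α/2)(π - kπh))`. -/
theorem Amat_eigenvector (α σ : ℝ) (hα : α ∈ Set.Ioc (1 : ℝ) 2) (hσ : 0 < σ)
    (N : ℕ) (hN : 1 ≤ N) (k : ℕ) (hk : k ≤ N) :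
    ∀ j : Fin (N + 1),
      Amul α σ N (fun i => Real.cos ((k : ℝ) * gridX N i)) j =
        eigVal α σ N k * Real.cos ((k : ℝ) * gridX N j) :=
  Amat_eigenvector_general α σ hα N k hk
end

section
/- The matrix A_{α,h} has negative diagonal entries and nonnegative off-diagonal entries: writing (A_{α,h})_{jm} = [A_{α,h} e_m]_j with e_m the m-th standard basis vector of ℝ^{N+1}, one has (A_{α,h})_{jj} < 0 for every j ∈ {0,…,N} and (A_{α,h})_{jm} ≥ 0 whenever j ≠ m. -/
lemma glCoeff_zero (α : ℝ) : glCoeff α 0 = 1 := by simp [glCoeff]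

lemma glCoeff_one (α : ℝ) : glCoeff α 1 = -α := by simp [glCoeff]

lemma glCoeff_succ (α : ℝ) (k : ℕ) :
    glCoeff α (k+1) = glCoeff α k * (((k : ℝ) - α) / ((k : ℝ) + 1)) := by
  unfold glCoeff
  rw [Finset.prod_range_succ, Nat.factorial_succ]
  have h1 : ((Nat.factorial k : ℝ)) ≠ 0 := by positivity
  have h2 : ((k : ℝ) + 1) ≠ 0 := by positivity
  push_cast
  field_simp
  ring

lemma glCoeff_add_two_nonneg (α : ℝ) (hα : α ∈ Set.Ioc (1:ℝ) 2) (k : ℕ) :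
    0 ≤ glCoeff α (k + 2) := by
  induction k with
  | zero =>
    have : glCoeff α 2 = -α * ((1 - α) / 2) := by
      rw [show (2:ℕ) = 1 + 1 from rfl, glCoeff_succ, glCoeff_one]; norm_num
    rw [this]
    nlinarith [hα.1]
  | succ n ih =>
    rw [show n + 1 + 2 = (n + 2) + 1 from rfl, glCoeff_succ]
    have h1 : (0:ℝ) ≤ ((n:ℝ) + 2) - α := by
      have := hα.2; push_cast; linarith
    have : (0:ℝ) ≤ (((n+2:ℕ) : ℝ) - α) / (((n+2:ℕ):ℝ) + 1) := by
      apply div_nonneg <;> push_cast <;> linarith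
    exact mul_nonneg ih this

lemma sum_glCoeff (α : ℝ) (n : ℕ) :
    ∑ k ∈ Finset.range (n+1), glCoeff α k
      = (-1:ℝ)^n * (∏ i ∈ Finset.range n, (α - 1 - i)) / n.factorial := by
  induction n with
  | zero => simp [glCoeff]
  | succ n ih =>
    rw [Finset.sum_range_succ, ih]
    have hP : ∏ i ∈ Finset.range (n+1), (α - i) = α * ∏ i ∈ Finset.range n, (α - 1 - i) := by
      rw [Finset.prod_range_succ']
      have : ∀ i ∈ Finset.range n, (α - ((i:ℝ)+1)) = (α - 1 - i) := by intro i _; ring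
      push_cast
      rw [Finset.prod_congr rfl this]
      ring
    unfold glCoeff
    rw [hP, Finset.prod_range_succ, Nat.factorial_succ]
    have h1 : ((Nat.factorial n : ℝ)) ≠ 0 := by positivity
    have h2 : ((n : ℝ) + 1) ≠ 0 := by positivity
    push_cast
    field_simp
    ring

lemma prod_sign (α : ℝ) (hα : α ∈ Set.Ioc (1:ℝ) 2) (n : ℕ) :
    0 ≤ (-1:ℝ)^n * ∏ i ∈ Finset.range (n+1), (α - 1 - i) := by
  induction n with
  | zero => simp; linarith [hα.1]
  | succ n ih =>
    rw [Finset.prod_range_succ, pow_succ]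
    have h2 : α - 1 - ((n+1 : ℕ):ℝ) ≤ 0 := by push_cast; linarith [hα.2]
    calc (0:ℝ) ≤ ((-1:ℝ)^n * ∏ i ∈ Finset.range (n+1), (α - 1 - i)) * (-(α - 1 - ((n+1:ℕ):ℝ))) :=
          mul_nonneg ih (by linarith)
      _ = (-1:ℝ)^n * (-1) * ((∏ i ∈ Finset.range (n+1), (α - 1 - i)) * (α - 1 - ((n+1:ℕ):ℝ))) := by ring

lemma sum_glCoeff_nonpos (α : ℝ) (hα : α ∈ Set.Ioc (1:ℝ) 2) (n : ℕ) :
    ∑ k ∈ Finset.range (n+2), glCoeff α k ≤ 0 := by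
  rw [show n + 2 = (n+1)+1 from rfl, sum_glCoeff]
  have hps := prod_sign α hα n
  have hf : (0:ℝ) < ((n+1).factorial : ℝ) := by positivity
  have hnum : (-1:ℝ)^(n+1) * ∏ i ∈ Finset.range (n+1), (α - 1 - i) ≤ 0 := by
    have heq : (-1:ℝ)^(n+1) * ∏ i ∈ Finset.range (n+1), (α - 1 - i)
        = -((-1:ℝ)^n * ∏ i ∈ Finset.range (n+1), (α - 1 - i)) := by ring
    rw [heq]; linarith
  exact div_nonpos_of_nonpos_of_nonneg hnum (le_of_lt hf)

lemma sum_tail_le (α : ℝ) (hα : α ∈ Set.Ioc (1:ℝ) 2) (n : ℕ) :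
    ∑ k ∈ Finset.range n, glCoeff α (k + 2) ≤ α - 1 := by
  cases n with
  | zero => simp; linarith [hα.1]
  | succ n =>
    have h := Finset.sum_range_add (glCoeff α) 2 (n+1)
    have h01 : ∑ k ∈ Finset.range 2, glCoeff α k = 1 - α := by
      simp [Finset.sum_range_succ, glCoeff_zero, glCoeff_one]; ring
    have h2 : ∑ k ∈ Finset.range (2 + (n+1)), glCoeff α k ≤ 0 := by
      rw [show 2 + (n+1) = (n+1) + 2 by ring]
      exact sum_glCoeff_nonpos α hα (n+1)
    have h3 : ∑ k ∈ Finset.range (n+1), glCoeff α (2 + k) ≤ α - 1 := by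
      rw [h, h01] at h2; linarith
    calc ∑ k ∈ Finset.range (n+1), glCoeff α (k + 2)
        = ∑ k ∈ Finset.range (n+1), glCoeff α (2 + k) := by
          apply Finset.sum_congr rfl; intro i _; rw [Nat.add_comm]
      _ ≤ α - 1 := h3

lemma glTail_summable (α : ℝ) (hα : α ∈ Set.Ioc (1:ℝ) 2) :
    Summable (fun k => glCoeff α (k + 2)) :=
  summable_of_sum_range_le (fun k => glCoeff_add_two_nonneg α hα k) (sum_tail_le α hα)

lemma glTail_tsum_le (α : ℝ) (hα : α ∈ Set.Ioc (1:ℝ) 2) :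
    ∑' k, glCoeff α (k + 2) ≤ α - 1 :=
  Summable.tsum_le_of_sum_range_le (glTail_summable α hα) (sum_tail_le α hα)

lemma neumannExt_coe (N : ℕ) (v : Fin (N+1) → ℝ) (m : ℕ) (hm : m ≤ N) :
    neumannExt N v (m : ℤ) = v ⟨m, Nat.lt_succ_of_le hm⟩ := by
  unfold neumannExt
  have hb : (m : ℤ) % (2 * ((N:ℤ) + 1)) = m :=
    Int.emod_eq_of_lt (by positivity) (by omega)
  simp only [hb, Int.toNat_natCast]
  rw [dif_pos hm]

lemma neumannExt_neg_one (N : ℕ) (v : Fin (N+1) → ℝ) :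
    neumannExt N v (-1) = v ⟨0, Nat.succ_pos N⟩ := by
  unfold neumannExt
  have hb : (-1 : ℤ) % (2 * ((N:ℤ) + 1)) = 2*(N:ℤ)+1 := by
    have h1 : (-1 : ℤ) % (2 * ((N:ℤ)+1)) = (-1 + 2*((N:ℤ)+1)*1) % (2*((N:ℤ)+1)) := by
      rw [Int.add_mul_emod_self_left]
    rw [h1, Int.emod_eq_of_lt (by omega) (by omega)]; ring
  simp only [hb]
  rw [dif_neg (by omega)]
  congr 1
  exact Fin.ext (by simp only [Fin.val_mk]; omega)

lemma neumannExt_top (N : ℕ) (v : Fin (N+1) → ℝ) :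
    neumannExt N v ((N:ℤ)+1) = v ⟨N, Nat.lt_succ_self N⟩ := by
  unfold neumannExt
  have hb : ((N:ℤ)+1) % (2 * ((N:ℤ) + 1)) = (N:ℤ)+1 :=
    Int.emod_eq_of_lt (by omega) (by omega)
  simp only [hb]
  rw [dif_neg (by omega)]
  congr 1
  exact Fin.ext (by simp only [Fin.val_mk]; omega)

lemma neumannExt_nonneg (N : ℕ) (v : Fin (N+1) → ℝ) (hv : ∀ i, 0 ≤ v i) (j : ℤ) :
    0 ≤ neumannExt N v j := by
  unfold neumannExt; split <;> apply hv

lemma neumannExt_le_one (N : ℕ) (v : Fin (N+1) → ℝ) (hv : ∀ i, v i ≤ 1) (j : ℤ) :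
    neumannExt N v j ≤ 1 := by
  unfold neumannExt; split <;> apply hv

/-- The matrix `A_{α,h}` has negative diagonal entries and nonnegative
off-diagonal entries. -/
theorem Amat_sign_pattern (α σ : ℝ) (hα : α ∈ Set.Ioc (1 : ℝ) 2) (hσ : 0 < σ)
    (N : ℕ) (hN : 1 ≤ N) :
    (∀ j : Fin (N + 1), Amat α σ N j j < 0) ∧
    (∀ j m : Fin (N + 1), j ≠ m → 0 ≤ Amat α σ N j m) := by
  obtain ⟨hα1, hα2⟩ := hα
  have hα' : α ∈ Set.Ioc (1:ℝ) 2 := ⟨hα1, hα2⟩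
  have hπ := Real.pi_pos
  have hcos : Real.cos (α * Real.pi / 2) < 0 := by
    have h1 : α * Real.pi / 2 = Real.pi - (Real.pi - α * Real.pi / 2) := by ring
    rw [h1, Real.cos_pi_sub]
    have hmem : Real.pi - α * Real.pi / 2 ∈ Set.Ioo (-(Real.pi/2)) (Real.pi/2) := by
      constructor <;> nlinarith
    have := Real.cos_pos_of_mem_Ioo hmem
    linarith
  have hH : (0:ℝ) < gridH N := by unfold gridH; positivity
  have hC : 0 < -σ / (2 * Real.cos (α * Real.pi / 2)) / gridH N ^ α := by
    apply div_pos
    · exact div_pos_of_neg_of_neg (by linarith) (by linarith)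
    · exact Real.rpow_pos_of_pos hH α
  constructor
  · -- diagonal
    intro j
    have hjN : (j:ℕ) ≤ N := Nat.lt_succ_iff.mp j.isLt
    simp only [Amat, Matrix.of_apply, Amul]
    set w : Fin (N+1) → ℝ := fun i => if i = j then (1:ℝ) else 0 with hwdef
    have hw0 : ∀ i, 0 ≤ w i := fun i => by rw [hwdef]; dsimp only; split <;> norm_num
    have hw1 : ∀ i, w i ≤ 1 := fun i => by rw [hwdef]; dsimp only; split <;> norm_num
    have wval : ∀ (a : ℕ) (ha : a < N+1), w ⟨a, ha⟩ = if a = (j:ℕ) then 1 else 0 := by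
      intro a ha
      rw [hwdef]; dsimp only
      by_cases h : a = (j:ℕ)
      · rw [if_pos (Fin.ext h), if_pos h]
      · rw [if_neg (fun hc => h (congrArg Fin.val hc)), if_neg h]
    set f : ℕ → ℝ := fun k => glCoeff α k *
      (neumannExt N w ((j:ℤ) + 1 - (k:ℤ)) + neumannExt N w ((j:ℤ) - 1 + (k:ℤ))) with hfdef
    have hf2nn : ∀ k, 0 ≤ f (k+2) := fun k =>
      mul_nonneg (glCoeff_add_two_nonneg α hα' k)
        (add_nonneg (neumannExt_nonneg N w hw0 _) (neumannExt_nonneg N w hw0 _))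
    have hf2ub : ∀ k, f (k+2) ≤ 2 * glCoeff α (k+2) := by
      intro k
      have hg := glCoeff_add_two_nonneg α hα' k
      have hs : neumannExt N w ((j:ℤ)+1-((k+2:ℕ):ℤ)) + neumannExt N w ((j:ℤ)-1+((k+2:ℕ):ℤ)) ≤ 2 := by
        linarith [neumannExt_le_one N w hw1 ((j:ℤ)+1-((k+2:ℕ):ℤ)),
          neumannExt_le_one N w hw1 ((j:ℤ)-1+((k+2:ℕ):ℤ))]
      calc f (k+2) = glCoeff α (k+2) *
            (neumannExt N w ((j:ℤ)+1-((k+2:ℕ):ℤ)) + neumannExt N w ((j:ℤ)-1+((k+2:ℕ):ℤ))) := rfl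
        _ ≤ glCoeff α (k+2) * 2 := mul_le_mul_of_nonneg_left hs hg
        _ = 2 * glCoeff α (k+2) := by ring
    have hsum2 : Summable (fun k => f (k+2)) :=
      Summable.of_nonneg_of_le hf2nn hf2ub ((glTail_summable α hα').mul_left 2)
    have hsumf : Summable f := (summable_nat_add_iff 2).mp hsum2
    have htail : ∑' k, f (k+2) ≤ 2*(α-1) := by
      calc ∑' k, f (k+2) ≤ ∑' k, 2 * glCoeff α (k+2) :=
            Summable.tsum_le_tsum hf2ub hsum2 ((glTail_summable α hα').mul_left 2)
        _ = 2 * ∑' k, glCoeff α (k+2) := tsum_mul_left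
        _ ≤ 2*(α-1) := by linarith [glTail_tsum_le α hα']
    have hsplit : f 0 + f 1 + ∑' k, f (k+2) = ∑' k, f k := by
      have h := Summable.sum_add_tsum_nat_add 2 hsumf
      rw [Finset.sum_range_succ, Finset.sum_range_one] at h
      linarith
    have hextj : neumannExt N w (((j:ℕ)):ℤ) = 1 := by
      rw [neumannExt_coe N w (j:ℕ) hjN, wval]
      simp
    have hf1 : f 1 = -(2*α) := by
      have e1 : (j:ℤ) + 1 - ((1:ℕ):ℤ) = ((j:ℕ):ℤ) := by push_cast; ring
      have e2 : (j:ℤ) - 1 + ((1:ℕ):ℤ) = ((j:ℕ):ℤ) := by push_cast; ring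
      calc f 1 = glCoeff α 1 *
            (neumannExt N w ((j:ℤ)+1-((1:ℕ):ℤ)) + neumannExt N w ((j:ℤ)-1+((1:ℕ):ℤ))) := rfl
        _ = -(2*α) := by rw [e1, e2, hextj, glCoeff_one]; ring
    have hf0 : f 0 ≤ 1 := by
      have e1 : (j:ℤ) + 1 - ((0:ℕ):ℤ) = (j:ℤ) + 1 := by push_cast; ring
      have e2 : (j:ℤ) - 1 + ((0:ℕ):ℤ) = (j:ℤ) - 1 := by push_cast; ring
      have hval : neumannExt N w ((j:ℤ)+1) + neumannExt N w ((j:ℤ)-1) ≤ 1 := by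
        by_cases h0 : (j:ℕ) = 0
        · have hp1eq : (j:ℤ)+1 = ((1:ℕ):ℤ) := by omega
          have hm1eq : (j:ℤ)-1 = -1 := by omega
          rw [hp1eq, hm1eq, neumannExt_coe N w 1 hN, neumannExt_neg_one, wval, wval]
          rw [if_neg (by omega), if_pos (by omega)]
          norm_num
        · by_cases hNval : (j:ℕ) = N
          · have hp1eq : (j:ℤ)+1 = (N:ℤ)+1 := by omega
            have hm1eq : (j:ℤ)-1 = ((N-1:ℕ):ℤ) := by omega
            rw [hp1eq, hm1eq, neumannExt_top, neumannExt_coe N w (N-1) (by omega), wval, wval]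
            rw [if_pos (by omega), if_neg (by omega)]
            norm_num
          · have hp1eq : (j:ℤ)+1 = (((j:ℕ)+1:ℕ):ℤ) := by omega
            have hm1eq : (j:ℤ)-1 = (((j:ℕ)-1:ℕ):ℤ) := by omega
            rw [hp1eq, hm1eq, neumannExt_coe N w ((j:ℕ)+1) (by omega),
              neumannExt_coe N w ((j:ℕ)-1) (by omega), wval, wval]
            rw [if_neg (by omega), if_neg (by omega)]
            norm_num
      calc f 0 = glCoeff α 0 *
            (neumannExt N w ((j:ℤ)+1-((0:ℕ):ℤ)) + neumannExt N w ((j:ℤ)-1+((0:ℕ):ℤ))) := rfl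
        _ = neumannExt N w ((j:ℤ)+1) + neumannExt N w ((j:ℤ)-1) := by
            rw [e1, e2, glCoeff_zero]; ring
        _ ≤ 1 := hval
    have hneg : ∑' k, f k ≤ -1 := by rw [← hsplit]; linarith
    exact mul_neg_of_pos_of_neg hC (by linarith)
  · -- off-diagonal
    intro j m hjm
    have hjN : (j:ℕ) ≤ N := Nat.lt_succ_iff.mp j.isLt
    simp only [Amat, Matrix.of_apply, Amul]
    set w : Fin (N+1) → ℝ := fun i => if i = m then (1:ℝ) else 0 with hwdef
    have hw0 : ∀ i, 0 ≤ w i := fun i => by rw [hwdef]; dsimp only; split <;> norm_num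
    apply mul_nonneg (le_of_lt hC)
    apply tsum_nonneg
    intro k
    by_cases hk : k = 1
    · subst hk
      have hextj : neumannExt N w (((j:ℕ)):ℤ) = 0 := by
        rw [neumannExt_coe N w (j:ℕ) hjN, hwdef]
        dsimp only
        rw [if_neg]
        intro hc
        exact hjm (by rw [← hc])
      have e1 : (j:ℤ) + 1 - ((1:ℕ):ℤ) = ((j:ℕ):ℤ) := by push_cast; ring
      have e2 : (j:ℤ) - 1 + ((1:ℕ):ℤ) = ((j:ℕ):ℤ) := by push_cast; ring
      rw [e1, e2, hextj]
      norm_num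
    · have hg : 0 ≤ glCoeff α k := by
        rcases k with _ | (_ | k)
        · rw [glCoeff_zero]; norm_num
        · exact (hk rfl).elim
        · exact glCoeff_add_two_nonneg α hα' k
      exact mul_nonneg hg (add_nonneg (neumannExt_nonneg N w hw0 _) (neumannExt_nonneg N w hw0 _))
end

section
/- Let α ∈ (1,2), b > 0 and x ∈ ℝ. Then the improper integral lim_{T→∞} ∫_0^T cos(b(x−y))·y^{1−α} dy exists and equals (Γ(2−α)/b^{2−α})·( cos(bx)·cos(π(2−α)/2) + sin(bx)·sin(π(2−α)/2) ). -/
/-!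
Since `cos (b (x - y)) = Re (e^{ibx} e^{-iby})`, the claim is the real part of
`∫₀^∞ y^(s-1) e^(-l y) dy = Γ(s) l^(-s)` at `l = ib`, `s = 2 - α`. For `re l > 0` this is the
Gamma integral, continued analytically from real `l`. Integrating by parts on `(1, ∞)` turns the
conditionally convergent integral into absolutely convergent ones that depend continuously on `l`
in the closed half-plane minus the origin, so the identity extends to `re l = 0`.
-/

open Filter Topology intervalIntegral

open Complex MeasureTheory Set

lemma norm_ofReal_cpow_mul_exp_neg_mul {y : ℝ} (hy : 0 < y) (w l : ℂ) :
    ‖(y : ℂ) ^ w * exp (-(l * y))‖ = y ^ w.re * Real.exp (-(l.re * y)) := by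
  rw [norm_mul, norm_cpow_eq_rpow_re_of_pos hy, norm_exp]
  simp

lemma norm_ofReal_cpow_mul_exp_neg_mul_le {y : ℝ} (hy : 0 < y) (w : ℂ) {l : ℂ}
    (hl : 0 ≤ l.re) : ‖(y : ℂ) ^ w * exp (-(l * y))‖ ≤ y ^ w.re := by
  rw [norm_ofReal_cpow_mul_exp_neg_mul hy]
  exact mul_le_of_le_one_right (by positivity) (Real.exp_le_one_iff.2 (by nlinarith))

lemma continuousOn_ofReal_cpow_mul_exp_neg_mul (w l : ℂ) :
    ContinuousOn (fun y : ℝ => (y : ℂ) ^ w * exp (-(l * y))) (Ioi 0) := fun y hy =>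
  ((continuousAt_ofReal_cpow_const y w (Or.inr hy.ne')).mul (by fun_prop)).continuousWithinAt

lemma integrableOn_ofReal_cpow_mul_exp_neg_mul_of_rpow {w l : ℂ} {A : Set ℝ} (hA : A ⊆ Ioi 0)
    (hAm : MeasurableSet A) (hl : 0 ≤ l.re) (h : IntegrableOn (fun y : ℝ => y ^ w.re) A) :
    IntegrableOn (fun y : ℝ => (y : ℂ) ^ w * exp (-(l * y))) A := by
  refine h.mono'
    (((continuousOn_ofReal_cpow_mul_exp_neg_mul w l).mono hA).aestronglyMeasurable hAm) ?_
  filter_upwards [ae_restrict_mem hAm] with y hy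
  exact norm_ofReal_cpow_mul_exp_neg_mul_le (hA hy) w hl

lemma intervalIntegrable_ofReal_cpow_mul_exp_neg_mul {w l : ℂ} (hw : -1 < w.re) (hl : 0 ≤ l.re)
    {T : ℝ} (hT : 0 ≤ T) :
    IntervalIntegrable (fun y : ℝ => (y : ℂ) ^ w * exp (-(l * y))) volume 0 T :=
  (intervalIntegrable_iff_integrableOn_Ioc_of_le hT).2 <|
    integrableOn_ofReal_cpow_mul_exp_neg_mul_of_rpow Ioc_subset_Ioi_self measurableSet_Ioc hl <|
      (intervalIntegrable_iff_integrableOn_Ioc_of_le hT).1 (intervalIntegrable_rpow' hw)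

lemma integrableOn_ofReal_cpow_mul_exp_neg_mul_Ioi {s l : ℂ} (hs : 0 < s.re) (hl : 0 < l.re) :
    IntegrableOn (fun y : ℝ => (y : ℂ) ^ (s - 1) * exp (-(l * y))) (Ioi 0) := by
  refine (integrableOn_rpow_mul_exp_neg_mul_rpow (s := s.re - 1) (by linarith) one_pos hl).mono'
    ((continuousOn_ofReal_cpow_mul_exp_neg_mul _ l).aestronglyMeasurable measurableSet_Ioi) ?_
  filter_upwards [ae_restrict_mem measurableSet_Ioi] with y hy
  rw [norm_ofReal_cpow_mul_exp_neg_mul hy, Real.rpow_one, neg_mul]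
  simp

lemma differentiableOn_integral_ofReal_cpow_mul_exp_neg_mul {s : ℂ} (hs : 0 < s.re) :
    DifferentiableOn ℂ (fun l : ℂ => ∫ y in Ioi (0 : ℝ), (y : ℂ) ^ (s - 1) * exp (-(l * y)))
      {l | 0 < l.re} := by
  intro l (hl : 0 < l.re)
  have hball : ∀ w ∈ Metric.ball l (l.re / 2), (l / 2).re ≤ w.re := fun w hw => by
    have := (abs_re_le_norm (w - l)).trans (mem_ball_iff_norm.1 hw).le
    rw [sub_re] at this
    simp only [div_ofNat_re]
    linarith [(abs_le.1 this).1]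
  have hderiv : ∀ (y : ℝ) (w : ℂ), 0 < y →
      HasDerivAt (fun w : ℂ => (y : ℂ) ^ (s - 1) * exp (-(w * y)))
        (-((y : ℂ) ^ (s + 1 - 1) * exp (-(w * y)))) w := fun y w hy => by
    refine ((((hasDerivAt_id w).mul_const (y : ℂ)).neg.cexp).const_mul ((y : ℂ) ^ (s - 1)))
      |>.congr_deriv ?_
    rw [add_sub_cancel_right, cpow_sub _ _ (ofReal_ne_zero.2 hy.ne'), cpow_one]
    field_simp [ofReal_ne_zero.2 hy.ne']
    simp
  -- On the ball `re w ≥ re l / 2`, so the derivative is dominated by `‖y^s e^(-l y / 2)‖`.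
  refine (hasDerivAt_integral_of_dominated_loc_of_deriv_le
    (F' := fun w (y : ℝ) => -((y : ℂ) ^ (s + 1 - 1) * exp (-(w * y))))
    (Metric.ball_mem_nhds l (half_pos hl))
    (Eventually.of_forall fun w =>
      (continuousOn_ofReal_cpow_mul_exp_neg_mul _ w).aestronglyMeasurable measurableSet_Ioi)
    (integrableOn_ofReal_cpow_mul_exp_neg_mul_Ioi hs hl)
    ((continuousOn_ofReal_cpow_mul_exp_neg_mul _ l).neg.aestronglyMeasurable measurableSet_Ioi)
    ?_ (integrableOn_ofReal_cpow_mul_exp_neg_mul_Ioi (s := s + 1) (l := l / 2)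
      (by simp; linarith) (by simp; linarith)).norm ?_).2.differentiableAt.differentiableWithinAt
  · filter_upwards [ae_restrict_mem measurableSet_Ioi] with y (hy : 0 < y) w hw
    rw [norm_neg, norm_ofReal_cpow_mul_exp_neg_mul hy, norm_ofReal_cpow_mul_exp_neg_mul hy,
      add_sub_cancel_right]
    have := hball w hw
    gcongr
  · filter_upwards [ae_restrict_mem measurableSet_Ioi] with y hy w _
    exact hderiv y w hy

lemma integral_ofReal_cpow_mul_exp_neg_mul_Ioi {s l : ℂ} (hs : 0 < s.re) (hl : 0 < l.re) :
    ∫ y in Ioi (0 : ℝ), (y : ℂ) ^ (s - 1) * exp (-(l * y)) = Gamma s * l ^ (-s) := by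
  have hU : IsOpen {l : ℂ | 0 < l.re} := isOpen_lt continuous_const continuous_re
  have hpow : DifferentiableOn ℂ (fun l : ℂ => Gamma s * l ^ (-s)) {l | 0 < l.re} :=
    fun l (hl : 0 < l.re) => (differentiableAt_id.cpow_const (.inl hl)).const_mul _
      |>.differentiableWithinAt
  have hreal : ∀ᶠ r : ℝ in 𝓝[>] 1,
      ∫ y in Ioi (0 : ℝ), (y : ℂ) ^ (s - 1) * exp (-(r * y)) = Gamma s * (r : ℂ) ^ (-s) := by
    filter_upwards [self_mem_nhdsWithin] with r (hr : 1 < r)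
    have harg : (r : ℂ).arg ≠ Real.pi := by
      rw [arg_ofReal_of_nonneg (by linarith)]
      exact Real.pi_ne_zero.symm
    rw [integral_cpow_mul_exp_neg_mul_Ioi hs (by linarith), one_div, inv_cpow _ _ harg,
      ← cpow_neg, mul_comm]
  have hnear : Tendsto (fun r : ℝ => (r : ℂ)) (𝓝[>] 1) (𝓝[≠] 1) :=
    tendsto_nhdsWithin_of_tendsto_nhds_of_eventually_within _
      (continuous_ofReal.tendsto' 1 1 ofReal_one |>.mono_left nhdsWithin_le_nhds)
      (eventually_nhdsWithin_of_forall fun r (hr : 1 < r) => by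
        simpa [← ofReal_one, ofReal_inj] using hr.ne')
  exact ((differentiableOn_integral_ofReal_cpow_mul_exp_neg_mul hs).analyticOnNhd hU)
    |>.eqOn_of_preconnected_of_frequently_eq (hpow.analyticOnNhd hU)
    (convex_halfSpace_re_gt 0).isPreconnected (by simp : (1 : ℂ) ∈ {l : ℂ | 0 < l.re})
    (hnear.frequently hreal.frequently) hl

lemma integral_ofReal_cpow_mul_exp_neg_mul_eq_by_parts (s : ℂ) {l : ℂ} (hl0 : l ≠ 0) {a T : ℝ}
    (ha : 0 < a) (haT : a ≤ T) :
    ∫ y in a..T, (y : ℂ) ^ (s - 1) * exp (-(l * y))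
      = (a : ℂ) ^ (s - 1) * exp (-(l * a)) / l - (T : ℂ) ^ (s - 1) * exp (-(l * T)) / l
        + (s - 1) / l * ∫ y in a..T, (y : ℂ) ^ (s - 2) * exp (-(l * y)) := by
  have hpos : uIcc a T ⊆ Ioi 0 := by
    rw [uIcc_of_le haT]
    exact fun y hy => ha.trans_le hy.1
  have hu : ∀ y ∈ uIcc a T, HasDerivAt (fun y : ℝ => (y : ℂ) ^ (s - 1))
      ((s - 1) * (y : ℂ) ^ (s - 2)) y := fun y hy => by
    have := (hasStrictDerivAt_cpow_const (c := s - 1)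
      (ofReal_mem_slitPlane.2 (hpos hy))).hasDerivAt
    rw [sub_sub, one_add_one_eq_two] at this
    exact this.comp_ofReal
  have hv : ∀ y ∈ uIcc a T, HasDerivAt (fun y : ℝ => -exp (-(l * y)) / l) (exp (-(l * y))) y :=
    fun y _ => by
      refine ((((hasDerivAt_id (y : ℂ)).const_mul l).neg.cexp).neg.div_const l).comp_ofReal
        |>.congr_deriv ?_
      field_simp
      simp
  have hu' : IntervalIntegrable (fun y : ℝ => (s - 1) * (y : ℂ) ^ (s - 2)) volume a T :=
    (ContinuousOn.mono (fun y (hy : 0 < y) =>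
      ((continuousAt_ofReal_cpow_const y _ (.inr hy.ne')).const_mul _).continuousWithinAt)
      hpos).intervalIntegrable
  rw [integral_mul_deriv_eq_deriv_mul hu hv hu'
    ((by fun_prop : Continuous fun y : ℝ => exp (-(l * y))).intervalIntegrable _ _)]
  simp_rw [show ∀ y : ℝ, (s - 1) * (y : ℂ) ^ (s - 2) * (-exp (-(l * y)) / l)
      = -((s - 1) / l) * ((y : ℂ) ^ (s - 2) * exp (-(l * y))) from fun y => by ring,
    intervalIntegral.integral_const_mul]
  ring

lemma continuousOn_integral_ofReal_cpow_mul_exp_neg_mul {w : ℂ} {A : Set ℝ} (hA : A ⊆ Ioi 0)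
    (hAm : MeasurableSet A) (h : IntegrableOn (fun y : ℝ => y ^ w.re) A) :
    ContinuousOn (fun l : ℂ => ∫ y in A, (y : ℂ) ^ w * exp (-(l * y))) {l | 0 ≤ l.re} :=
  continuousOn_of_dominated
    (fun l _ => ((continuousOn_ofReal_cpow_mul_exp_neg_mul w l).mono hA).aestronglyMeasurable hAm)
    (fun l hl => by
      filter_upwards [ae_restrict_mem hAm] with y hy
      exact norm_ofReal_cpow_mul_exp_neg_mul_le (hA hy) w hl)
    h (Eventually.of_forall fun y => by fun_prop)

/-- `∫₀^∞ y^(s-1) e^(-l y) dy` with the integral over `(1, ∞)` integrated by parts once, so that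
both remaining integrals converge absolutely for `0 ≤ re l` and `re s < 1`. -/
noncomputable def cpowExpIntegralByParts (s l : ℂ) : ℂ :=
  (∫ y in Ioc (0 : ℝ) 1, (y : ℂ) ^ (s - 1) * exp (-(l * y))) + exp (-l) / l
    + (s - 1) / l * ∫ y in Ioi (1 : ℝ), (y : ℂ) ^ (s - 2) * exp (-(l * y))

lemma tendsto_intervalIntegral_cpowExpIntegralByParts {s l : ℂ} (hs : 0 < s.re)
    (hs1 : s.re < 1) (hl : 0 ≤ l.re) (hl0 : l ≠ 0) :
    Tendsto (fun T : ℝ => ∫ y in (0 : ℝ)..T, (y : ℂ) ^ (s - 1) * exp (-(l * y))) atTop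
      (𝓝 (cpowExpIntegralByParts s l)) := by
  have hboundary : Tendsto (fun T : ℝ => (T : ℂ) ^ (s - 1) * exp (-(l * T))) atTop (𝓝 0) := by
    refine squeeze_zero_norm' ?_
      (by simpa using tendsto_rpow_neg_atTop (y := 1 - s.re) (by linarith))
    filter_upwards [eventually_gt_atTop 0] with T hT
    simpa using norm_ofReal_cpow_mul_exp_neg_mul_le hT (s - 1) hl
  have htail : Tendsto (fun T : ℝ => ∫ y in (1 : ℝ)..T, (y : ℂ) ^ (s - 2) * exp (-(l * y)))
      atTop (𝓝 (∫ y in Ioi (1 : ℝ), (y : ℂ) ^ (s - 2) * exp (-(l * y)))) :=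
    intervalIntegral_tendsto_integral_Ioi 1
      (integrableOn_ofReal_cpow_mul_exp_neg_mul_of_rpow (Ioi_subset_Ioi zero_le_one)
        measurableSet_Ioi hl (integrableOn_Ioi_rpow_of_lt (by simp; linarith) one_pos)) tendsto_id
  have hint {T : ℝ} (hT : 0 ≤ T) := intervalIntegrable_ofReal_cpow_mul_exp_neg_mul
    (w := s - 1) (by simpa) hl hT
  have hlim := ((hboundary.div_const l).const_sub
    ((∫ y in Ioc (0 : ℝ) 1, (y : ℂ) ^ (s - 1) * exp (-(l * y))) + exp (-l) / l)).add
      (htail.const_mul ((s - 1) / l))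
  rw [zero_div, sub_zero] at hlim
  refine hlim.congr' ?_
  filter_upwards [eventually_ge_atTop 1] with T hT
  rw [← integral_add_adjacent_intervals (hint zero_le_one) ((hint zero_le_one).symm.trans
    (hint (zero_le_one.trans hT))), integral_of_le zero_le_one,
    integral_ofReal_cpow_mul_exp_neg_mul_eq_by_parts s hl0 one_pos hT]
  simp only [ofReal_one, one_cpow, mul_one, one_mul]
  ring

lemma continuousOn_cpowExpIntegralByParts {s : ℂ} (hs : 0 < s.re) (hs1 : s.re < 1) :
    ContinuousOn (cpowExpIntegralByParts s) ({l | 0 ≤ l.re} \ {0}) := by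
  have hhead := continuousOn_integral_ofReal_cpow_mul_exp_neg_mul (w := s - 1)
    Ioc_subset_Ioi_self measurableSet_Ioc
    ((intervalIntegrable_iff_integrableOn_Ioc_of_le zero_le_one).1
      (intervalIntegrable_rpow' (by simpa)))
  have htail := continuousOn_integral_ofReal_cpow_mul_exp_neg_mul (w := s - 2)
    (Ioi_subset_Ioi zero_le_one) measurableSet_Ioi
    (integrableOn_Ioi_rpow_of_lt (by simp; linarith) one_pos)
  have hinv : ContinuousOn (fun l : ℂ => l⁻¹) ({l | 0 ≤ l.re} \ {0}) :=
    continuousOn_inv₀.mono fun l hl => hl.2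
  have hexp : Continuous fun l : ℂ => exp (-l) := by fun_prop
  exact ((hhead.mono sdiff_subset).add (hexp.continuousOn.mul hinv)).add
    ((continuousOn_const.mul hinv).mul (htail.mono sdiff_subset))

lemma cpowExpIntegralByParts_eq {s l : ℂ} (hs : 0 < s.re) (hs1 : s.re < 1) (hl : 0 ≤ l.re)
    (hl0 : l ≠ 0) : cpowExpIntegralByParts s l = Gamma s * l ^ (-s) := by
  refine Set.EqOn.of_subset_closure (s := {l | 0 < l.re}) (g := fun l => Gamma s * l ^ (-s)) ?_
    (continuousOn_cpowExpIntegralByParts hs hs1) ?_ ?_ ?_ ⟨hl, hl0⟩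
  · intro l (hl : 0 < l.re)
    dsimp only
    rw [← integral_ofReal_cpow_mul_exp_neg_mul_Ioi hs hl]
    exact tendsto_nhds_unique
      (tendsto_intervalIntegral_cpowExpIntegralByParts hs hs1 hl.le (by rintro rfl; simp at hl))
      (intervalIntegral_tendsto_integral_Ioi 0
        (integrableOn_ofReal_cpow_mul_exp_neg_mul_Ioi hs hl) tendsto_id)
  · refine fun l hl => ((continuousAt_cpow_const ?_).const_mul _).continuousWithinAt
    rcases (show 0 ≤ l.re from hl.1).lt_or_eq with hre | hre
    · exact .inl hre
    · exact .inr fun him => hl.2 (ext hre.symm him)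
  · exact fun l (hl : 0 < l.re) => ⟨hl.le, by rintro rfl; simp at hl⟩
  · rw [closure_setOfPred_lt_re]
    exact sdiff_subset

theorem tendsto_intervalIntegral_ofReal_cpow_mul_exp_neg_mul {s l : ℂ} (hs : 0 < s.re)
    (hs1 : s.re < 1) (hl : 0 ≤ l.re) (hl0 : l ≠ 0) :
    Tendsto (fun T : ℝ => ∫ y in (0 : ℝ)..T, (y : ℂ) ^ (s - 1) * exp (-(l * y))) atTop
      (𝓝 (Gamma s * l ^ (-s))) :=
  cpowExpIntegralByParts_eq hs hs1 hl hl0 ▸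
    tendsto_intervalIntegral_cpowExpIntegralByParts hs hs1 hl hl0

lemma ofReal_mul_I_cpow_ofReal {b : ℝ} (hb : 0 < b) (t : ℝ) :
    ((b : ℂ) * I) ^ (t : ℂ) = ((b ^ t : ℝ) : ℂ) * exp ((Real.pi / 2 * t : ℝ) * I) := by
  rw [cpow_def_of_ne_zero (mul_ne_zero (ofReal_ne_zero.2 hb.ne') I_ne_zero),
    log_ofReal_mul hb I_ne_zero, log_I, Real.rpow_def_of_pos hb, ofReal_exp, ← exp_add]
  push_cast
  ring_nf

lemma re_exp_mul_I_mul_Gamma_mul_cpow {b : ℝ} (hb : 0 < b) (t θ : ℝ) :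
    (exp (θ * I) * (Gamma t * ((b : ℂ) * I) ^ (-(t : ℂ)))).re
      = Real.Gamma t / b ^ t
        * (Real.cos θ * Real.cos (Real.pi * t / 2) + Real.sin θ * Real.sin (Real.pi * t / 2)) := by
  rw [← ofReal_neg, ofReal_mul_I_cpow_ofReal hb, Gamma_ofReal,
    show exp (θ * I) * (Real.Gamma t * (((b ^ (-t) : ℝ) : ℂ) * exp ((Real.pi / 2 * -t : ℝ) * I)))
      = ((Real.Gamma t * b ^ (-t) : ℝ) : ℂ) * exp ((θ - Real.pi * t / 2 : ℝ) * I) by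
    rw [show ((θ - Real.pi * t / 2 : ℝ) : ℂ) * I = θ * I + (Real.pi / 2 * -t : ℝ) * I by
      push_cast; ring, exp_add]
    push_cast
    ring,
    re_ofReal_mul, exp_ofReal_mul_I_re, Real.cos_sub, Real.rpow_neg hb.le]
  ring

lemma cos_mul_rpow_eq_re {b x y : ℝ} (hy : 0 ≤ y) (p : ℝ) :
    Real.cos (b * (x - y)) * y ^ p
      = (exp ((b * x : ℝ) * I) * ((y : ℂ) ^ (p : ℂ) * exp (-(b * I * y)))).re := by
  rw [← ofReal_cpow hy, mul_left_comm, ← exp_add,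
    show (b * x : ℝ) * I + -(b * I * y) = (b * (x - y) : ℝ) * I by push_cast; ring,
    re_ofReal_mul, exp_ofReal_mul_I_re, mul_comm]

/-- For `α ∈ (1,2)`, `b > 0` and `x ∈ ℝ`, the improper integral
`∫_0^∞ cos(b(x-y)) y^{1-α} dy` exists and equals
`(Γ(2-α)/b^{2-α}) (cos(bx) cos(π(2-α)/2) + sin(bx) sin(π(2-α)/2))`. -/
theorem left_fractional_integral_cos (α b x : ℝ) (hα : α ∈ Set.Ioo (1 : ℝ) 2) (hb : 0 < b) :
    Tendsto (fun T : ℝ => ∫ y in (0 : ℝ)..T, Real.cos (b * (x - y)) * y ^ (1 - α)) atTop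
      (𝓝 (Real.Gamma (2 - α) / b ^ (2 - α) *
        (Real.cos (b * x) * Real.cos (Real.pi * (2 - α) / 2) +
          Real.sin (b * x) * Real.sin (Real.pi * (2 - α) / 2)))) := by
  obtain ⟨hα1, hα2⟩ := hα
  have hs : (((2 - α : ℝ) : ℂ) - 1) = ((1 - α : ℝ) : ℂ) := by push_cast; ring
  have hlim := tendsto_intervalIntegral_ofReal_cpow_mul_exp_neg_mul (s := ((2 - α : ℝ) : ℂ))
    (l := b * I) (by simp; linarith) (by simp; linarith) (by simp) (by simp [hb.ne'])
  have hre := (continuous_re.tendsto _).comp (hlim.const_mul (exp ((b * x : ℝ) * I)))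
  rw [re_exp_mul_I_mul_Gamma_mul_cpow hb] at hre
  refine hre.congr' ?_
  filter_upwards [eventually_ge_atTop 0] with T hT
  rw [Function.comp_apply, ← intervalIntegral.integral_const_mul, ← RCLike.re_to_complex,
    ← intervalIntegral_re]
  · refine integral_congr fun y hy => ?_
    rw [uIcc_of_le hT] at hy
    simp only [hs, RCLike.re_to_complex, cos_mul_rpow_eq_re hy.1]
  · exact (intervalIntegrable_ofReal_cpow_mul_exp_neg_mul (by simp; linarith) (by simp) hT)
      |>.const_mul _
end

section
/- Let α ∈ (1,2), b > 0 and x ∈ ℝ. Then the improper integral lim_{T→∞} ∫_0^T cos(b(x+y))·y^{1−α} dy exists and equals (Γ(2−α)/b^{2−α})·( cos(bx)·cos(π(2−α)/2) − sin(bx)·sin(π(2−α)/2) ). -/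
/-!
For `Re w > 0` the Laplace transform `∫₀^∞ y^(s-1) e^(-wy) dy` equals `Γ(s) w^(-s)`: both sides
are holomorphic in `w` and agree for real `w > 0`. At `w = -ib` the integral converges only
conditionally. Integrating by parts against the decreasing factor `y^(s-1)` (`0 < s < 1`) bounds
every tail `∫_T^∞` by `2 T^(s-1) / |w|`, uniformly on `Re w ≥ 0`, so the identity passes to the
limit `z + ε → z` on the boundary line. The claim, with `s = 2 - α`, is the real part of `e^(ibx)`
times the identity at `z = -ib`.
-/

open Filter Topology intervalIntegral

open MeasureTheory Set Complex

theorem norm_integral_smul_deriv_le_of_deriv_nonpos {E : Type*} [NormedAddCommGroup E]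
    [NormedSpace ℝ E] [CompleteSpace E] {u u' : ℝ → ℝ} {v v' : ℝ → E} {a b M : ℝ} (hab : a ≤ b)
    (hu : ∀ x ∈ Icc a b, HasDerivAt u (u' x) x) (hv : ∀ x ∈ Icc a b, HasDerivAt v (v' x) x)
    (hu' : IntervalIntegrable u' volume a b) (hv' : IntervalIntegrable v' volume a b)
    (hu'_nonpos : ∀ x ∈ Icc a b, u' x ≤ 0) (hub : 0 ≤ u b) (hvM : ∀ x ∈ Icc a b, ‖v x‖ ≤ M) :
    ‖∫ x in a..b, u x • v' x‖ ≤ 2 * M * u a := by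
  rw [← uIcc_of_le hab] at hu hv
  have hdrop : ∫ x in a..b, -u' x = u a - u b := by
    rw [intervalIntegral.integral_neg, integral_eq_sub_of_hasDerivAt hu hu']; ring
  have hua : u b ≤ u a := by
    have := integral_nonneg (μ := volume) hab fun x hx => neg_nonneg.2 (hu'_nonpos x hx)
    linarith
  have hend : ∀ x ∈ Icc a b, 0 ≤ u x → ‖u x • v x‖ ≤ M * u x := fun x hx hux => by
    rw [norm_smul, Real.norm_of_nonneg hux, mul_comm]
    exact mul_le_mul_of_nonneg_right (hvM x hx) hux
  have hrest : ‖∫ x in a..b, u' x • v x‖ ≤ M * (u a - u b) := by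
    rw [← hdrop, ← intervalIntegral.integral_const_mul]
    refine norm_integral_le_of_norm_le hab (ae_of_all _ fun x hx => ?_) (hu'.neg.const_mul M)
    have hx := Ioc_subset_Icc_self hx
    rw [norm_smul, Real.norm_of_nonpos (hu'_nonpos x hx), mul_comm]
    exact mul_le_mul_of_nonneg_right (hvM x hx) (neg_nonneg.2 (hu'_nonpos x hx))
  rw [integral_smul_deriv_eq_deriv_smul hu hv hu' hv']
  calc _ ≤ ‖u b • v b‖ + ‖u a • v a‖ + ‖∫ x in a..b, u' x • v x‖ :=
        norm_sub_le_of_le (norm_sub_le _ _) le_rfl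
    _ ≤ M * u b + M * u a + M * (u a - u b) := by
        gcongr
        exacts [hend b (right_mem_Icc.2 hab) hub, hend a (left_mem_Icc.2 hab) (hub.trans hua)]
    _ = 2 * M * u a := by ring

theorem norm_ofReal_rpow_mul_cexp (s : ℝ) (w : ℂ) {y : ℝ} (hy : 0 ≤ y) :
    ‖((y ^ (s - 1) : ℝ) : ℂ) * cexp (-(w * y))‖ = y ^ (s - 1) * Real.exp (-(w.re * y)) := by
  simp [Complex.norm_exp, Real.rpow_nonneg hy]

theorem norm_ofReal_rpow_mul_cexp_le (s : ℝ) {w : ℂ} (hw : 0 ≤ w.re) {y : ℝ} (hy : 0 ≤ y) :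
    ‖((y ^ (s - 1) : ℝ) : ℂ) * cexp (-(w * y))‖ ≤ y ^ (s - 1) := by
  rw [norm_ofReal_rpow_mul_cexp s w hy]
  exact mul_le_of_le_one_right (Real.rpow_nonneg hy _)
    (Real.exp_le_one_iff.2 (neg_nonpos.2 (mul_nonneg hw hy)))

theorem integrableOn_rpow_mul_exp_neg_mul_Ioi {p c : ℝ} (hp : -1 < p) (hc : 0 < c) :
    IntegrableOn (fun y : ℝ => y ^ p * Real.exp (-(c * y))) (Ioi 0) := by
  simpa [Real.rpow_one] using integrableOn_rpow_mul_exp_neg_mul_rpow hp one_pos hc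

theorem integrableOn_ofReal_rpow_mul_cexp_Ioi {s : ℝ} {w : ℂ} (hs : 0 < s) (hw : 0 < w.re) :
    IntegrableOn (fun y : ℝ => ((y ^ (s - 1) : ℝ) : ℂ) * cexp (-(w * y))) (Ioi 0) := by
  refine (integrableOn_rpow_mul_exp_neg_mul_Ioi (p := s - 1) (by linarith) hw).mono'
    (by fun_prop) ?_
  filter_upwards [ae_restrict_mem measurableSet_Ioi] with y hy
  exact (norm_ofReal_rpow_mul_cexp s w (le_of_lt hy)).le

theorem intervalIntegrable_ofReal_rpow_mul_cexp {s T : ℝ} {w : ℂ} (hs : 0 < s) (hw : 0 ≤ w.re)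
    (hT : 0 ≤ T) :
    IntervalIntegrable (fun y : ℝ => ((y ^ (s - 1) : ℝ) : ℂ) * cexp (-(w * y))) volume 0 T := by
  refine (intervalIntegral.intervalIntegrable_rpow' (r := s - 1) (by linarith)).mono_fun'
    (by fun_prop) ?_
  filter_upwards [ae_restrict_mem measurableSet_uIoc] with y hy
  rw [uIoc_of_le hT] at hy
  exact norm_ofReal_rpow_mul_cexp_le s hw hy.1.le

theorem norm_integral_ofReal_rpow_mul_cexp_le {s A T : ℝ} {w : ℂ} (hs : s ≤ 1) (hw : 0 ≤ w.re)
    (hw0 : w ≠ 0) (hA : 0 < A) (hAT : A ≤ T) :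
    ‖∫ y in A..T, ((y ^ (s - 1) : ℝ) : ℂ) * cexp (-(w * y))‖ ≤ 2 * ‖w‖⁻¹ * A ^ (s - 1) := by
  have hpos : ∀ y ∈ Icc A T, 0 < y := fun y hy => hA.trans_le hy.1
  have hu : ∀ y ∈ Icc A T, HasDerivAt (· ^ (s - 1)) ((s - 1) * y ^ (s - 1 - 1)) y :=
    fun y hy => Real.hasDerivAt_rpow_const (Or.inl (hpos y hy).ne')
  have hv : ∀ y ∈ Icc A T, HasDerivAt (fun y : ℝ => cexp (-(w * y)) / -w) (cexp (-(w * y))) y := by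
    intro y _
    have := (((hasDerivAt_id (y : ℂ)).const_mul w).neg.cexp.comp_ofReal).div_const (-w)
    simpa [mul_div_assoc, hw0] using this
  have hu' : IntervalIntegrable (fun y => (s - 1) * y ^ (s - 1 - 1)) volume A T :=
    (continuousOn_const.mul (continuousOn_id.rpow_const fun y hy =>
      Or.inl (hpos y (by rwa [uIcc_of_le hAT] at hy)).ne')).intervalIntegrable
  have hv' : IntervalIntegrable (fun y : ℝ => cexp (-(w * y))) volume A T :=
    (by fun_prop : Continuous fun y : ℝ => cexp (-(w * y))).intervalIntegrable _ _
  have hvM : ∀ y ∈ Icc A T, ‖cexp (-(w * y)) / -w‖ ≤ ‖w‖⁻¹ := by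
    intro y hy
    rw [norm_div, norm_neg, div_eq_mul_inv]
    refine mul_le_of_le_one_left (by positivity) ?_
    simpa [Complex.norm_exp] using mul_nonneg hw (hpos y hy).le
  simpa only [Complex.real_smul] using
    norm_integral_smul_deriv_le_of_deriv_nonpos hAT hu hv hu' hv'
      (fun y hy => mul_nonpos_of_nonpos_of_nonneg (by linarith) (Real.rpow_nonneg (hpos y hy).le _))
      (Real.rpow_nonneg (hA.le.trans hAT) _) hvM

theorem continuousOn_integral_ofReal_rpow_mul_cexp {s T : ℝ} (hs : 0 < s) (hT : 0 ≤ T) :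
    ContinuousOn (fun w : ℂ => ∫ y in 0..T, ((y ^ (s - 1) : ℝ) : ℂ) * cexp (-(w * y)))
      {w | 0 ≤ w.re} := by
  intro z hz
  refine continuousWithinAt_of_dominated_interval (bound := fun y => y ^ (s - 1))
    (Eventually.of_forall fun _ => by fun_prop) ?_
    (intervalIntegral.intervalIntegrable_rpow' (by linarith))
    (ae_of_all _ fun y _ => by fun_prop)
  filter_upwards [self_mem_nhdsWithin] with w (hw : 0 ≤ w.re)
  refine ae_of_all _ fun y hy => ?_
  rw [uIoc_of_le hT] at hy
  exact norm_ofReal_rpow_mul_cexp_le s hw hy.1.le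

theorem differentiableAt_integral_ofReal_rpow_mul_cexp_Ioi {s : ℝ} {z : ℂ} (hs : 0 < s)
    (hz : 0 < z.re) :
    DifferentiableAt ℂ
      (fun w : ℂ => ∫ y in Ioi 0, ((y ^ (s - 1) : ℝ) : ℂ) * cexp (-(w * y))) z := by
  have hU : {w : ℂ | z.re / 2 < w.re} ∈ 𝓝 z :=
    (isOpen_lt continuous_const continuous_re).mem_nhds (half_lt_self hz)
  have hnorm : ∀ w : ℂ, ∀ y : ℝ, 0 ≤ y →
      ‖((y ^ s : ℝ) : ℂ) * cexp (-(w * y))‖ = y ^ s * Real.exp (-(w.re * y)) := fun w y hy => by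
    simpa only [add_sub_cancel_right] using norm_ofReal_rpow_mul_cexp (s + 1) w hy
  refine (hasDerivAt_integral_of_dominated_loc_of_deriv_le hU
    (F := fun w y => ((y ^ (s - 1) : ℝ) : ℂ) * cexp (-(w * y)))
    (F' := fun w y => -(((y ^ s : ℝ) : ℂ) * cexp (-(w * y))))
    (bound := fun y => y ^ s * Real.exp (-(z.re / 2 * y)))
    (Eventually.of_forall fun _ => by fun_prop)
    (integrableOn_ofReal_rpow_mul_cexp_Ioi hs hz)
    (by fun_prop) ?_
    (integrableOn_rpow_mul_exp_neg_mul_Ioi (by linarith) (half_pos hz)) ?_).2.differentiableAt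
  · filter_upwards [ae_restrict_mem measurableSet_Ioi] with y (hy : 0 < y) w (hw : z.re / 2 < w.re)
    rw [norm_neg, hnorm w y hy.le]
    gcongr
  · filter_upwards [ae_restrict_mem measurableSet_Ioi] with y (hy : 0 < y) w _
    refine (((hasDerivAt_mul_const (y : ℂ)).neg.cexp).const_mul
      ((y ^ (s - 1) : ℝ) : ℂ)).congr_deriv ?_
    rw [Real.rpow_sub_one hy.ne', ofReal_div]
    have hy' : (y : ℂ) ≠ 0 := ofReal_ne_zero.2 hy.ne'
    simp only [Pi.neg_apply]
    field_simp

theorem integral_ofReal_rpow_mul_cexp_Ioi {s : ℝ} {w : ℂ} (hs : 0 < s) (hw : 0 < w.re) :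
    ∫ y in Ioi 0, ((y ^ (s - 1) : ℝ) : ℂ) * cexp (-(w * y)) = Gamma s * w ^ (-(s : ℂ)) := by
  have hU : IsOpen {w : ℂ | 0 < w.re} := isOpen_lt continuous_const continuous_re
  have hlhs : AnalyticOnNhd ℂ
      (fun w : ℂ => ∫ y in Ioi 0, ((y ^ (s - 1) : ℝ) : ℂ) * cexp (-(w * y))) {w | 0 < w.re} :=
    DifferentiableOn.analyticOnNhd (fun w hw =>
      (differentiableAt_integral_ofReal_rpow_mul_cexp_Ioi hs hw).differentiableWithinAt) hU
  have hrhs : AnalyticOnNhd ℂ (fun w : ℂ => Gamma s * w ^ (-(s : ℂ))) {w | 0 < w.re} :=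
    DifferentiableOn.analyticOnNhd (fun w hw =>
      ((differentiableAt_id.cpow_const (Or.inl hw)).const_mul _).differentiableWithinAt) hU
  have hreal : ∀ r : ℝ, 0 < r →
      ∫ y in Ioi 0, ((y ^ (s - 1) : ℝ) : ℂ) * cexp (-(r * y)) = Gamma s * (r : ℂ) ^ (-(s : ℂ)) := by
    intro r hr
    rw [← setIntegral_congr_fun measurableSet_Ioi fun y (hy : 0 < y) => by
      rw [ofReal_cpow hy.le, ofReal_sub, ofReal_one],
      integral_cpow_mul_exp_neg_mul_Ioi (by simpa using hs) hr, mul_comm, one_div,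
      inv_cpow _ _ (by simp [arg_ofReal_of_nonneg hr.le, Real.pi_ne_zero.symm]), ← cpow_neg]
  have hofReal : Tendsto ((↑) : ℝ → ℂ) (𝓝[≠] 1) (𝓝[≠] 1) := by
    rw [tendsto_nhdsWithin_iff]
    exact ⟨tendsto_nhdsWithin_of_tendsto_nhds continuous_ofReal.continuousAt,
      eventually_nhdsWithin_iff.2 (Eventually.of_forall fun t ht => ofReal_ne_one.2 ht)⟩
  refine hlhs.eqOn_of_preconnected_of_frequently_eq hrhs (convex_halfSpace_re_gt 0).isPreconnected
    (by simp : (1 : ℂ) ∈ {w : ℂ | 0 < w.re}) (hofReal.frequently ?_) hw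
  exact ((eventually_gt_nhds zero_lt_one).filter_mono nhdsWithin_le_nhds).mono hreal |>.frequently

theorem norm_integral_ofReal_rpow_mul_cexp_Ioi_le {s A : ℝ} {w : ℂ} (hs0 : 0 < s) (hs : s ≤ 1)
    (hw : 0 < w.re) (hA : 0 < A) :
    ‖∫ y in Ioi A, ((y ^ (s - 1) : ℝ) : ℂ) * cexp (-(w * y))‖ ≤ 2 * ‖w‖⁻¹ * A ^ (s - 1) := by
  have hint := (integrableOn_ofReal_rpow_mul_cexp_Ioi hs0 hw).mono_set (Ioi_subset_Ioi hA.le)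
  refine le_of_tendsto (intervalIntegral_tendsto_integral_Ioi A hint tendsto_id).norm ?_
  filter_upwards [eventually_ge_atTop A] with T hT
  exact norm_integral_ofReal_rpow_mul_cexp_le hs hw.le (fun h => by simp [h] at hw) hA hT

theorem norm_le_norm_add_ofReal {z : ℂ} (hz : 0 ≤ z.re) {ε : ℝ} (hε : 0 ≤ ε) :
    ‖z‖ ≤ ‖z + ε‖ := by
  rw [← sq_le_sq₀ (norm_nonneg _) (norm_nonneg _), Complex.sq_norm, Complex.sq_norm,
    normSq_apply, normSq_apply]
  simp only [add_re, ofReal_re, add_im, ofReal_im, add_zero]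
  nlinarith

theorem mem_slitPlane_of_nonneg_re {z : ℂ} (hz : 0 ≤ z.re) (hz0 : z ≠ 0) : z ∈ slitPlane := by
  rw [mem_slitPlane_iff]
  by_contra! h
  exact hz0 (Complex.ext (le_antisymm h.1 hz) h.2)

theorem norm_integral_ofReal_rpow_mul_cexp_sub_le {s T : ℝ} {z : ℂ} (hs0 : 0 < s) (hs : s ≤ 1)
    (hz : 0 ≤ z.re) (hz0 : z ≠ 0) (hT : 0 < T) :
    ‖(∫ y in 0..T, ((y ^ (s - 1) : ℝ) : ℂ) * cexp (-(z * y))) - Gamma s * z ^ (-(s : ℂ))‖ ≤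
      2 * ‖z‖⁻¹ * T ^ (s - 1) := by
  have hshift : Tendsto (fun ε : ℝ => z + ε) (𝓝[>] 0) (𝓝 z) :=
    ((by fun_prop : Continuous fun ε : ℝ => z + ε).tendsto' 0 z (by simp)).mono_left
      nhdsWithin_le_nhds
  have hshift' : Tendsto (fun ε : ℝ => z + ε) (𝓝[>] 0) (𝓝[{w | 0 ≤ w.re}] z) :=
    tendsto_nhdsWithin_of_tendsto_nhds_of_eventually_within _ hshift <| by
      filter_upwards [self_mem_nhdsWithin] with ε (hε : 0 < ε)
      simp only [add_re, ofReal_re]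
      linarith
  have hlim := ((continuousOn_integral_ofReal_rpow_mul_cexp hs0 hT.le z hz).tendsto.comp
    hshift').sub (((continuousAt_cpow_const (b := -(s : ℂ))
      (mem_slitPlane_of_nonneg_re hz hz0)).tendsto.comp hshift).const_mul (Gamma s))
  -- at `z + ε` the difference is minus the tail over `Ioi T`, bounded uniformly in `ε`
  refine le_of_tendsto hlim.norm ?_
  filter_upwards [self_mem_nhdsWithin] with ε (hε : 0 < ε)
  have hw : 0 < (z + ε).re := by simp only [add_re, ofReal_re]; linarith
  have hint := integrableOn_ofReal_rpow_mul_cexp_Ioi hs0 hw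
  simp only [Function.comp_apply]
  rw [← integral_ofReal_rpow_mul_cexp_Ioi hs0 hw,
    ← integral_interval_add_Ioi hint (hint.mono_set (Ioi_subset_Ioi hT.le)), sub_add_cancel_left,
    norm_neg]
  calc _ ≤ 2 * ‖z + ε‖⁻¹ * T ^ (s - 1) := norm_integral_ofReal_rpow_mul_cexp_Ioi_le hs0 hs hw hT
    _ ≤ 2 * ‖z‖⁻¹ * T ^ (s - 1) := by
      gcongr
      exact norm_le_norm_add_ofReal hz hε.le

theorem tendsto_integral_ofReal_rpow_mul_cexp {s : ℝ} {z : ℂ} (hs0 : 0 < s) (hs : s < 1)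
    (hz : 0 ≤ z.re) (hz0 : z ≠ 0) :
    Tendsto (fun T : ℝ => ∫ y in 0..T, ((y ^ (s - 1) : ℝ) : ℂ) * cexp (-(z * y))) atTop
      (𝓝 (Gamma s * z ^ (-(s : ℂ)))) := by
  have hbound : Tendsto (fun T : ℝ => 2 * ‖z‖⁻¹ * T ^ (s - 1)) atTop (𝓝 0) := by
    simpa using (tendsto_rpow_neg_atTop (by linarith : 0 < 1 - s)).const_mul (2 * ‖z‖⁻¹)
  refine tendsto_iff_norm_sub_tendsto_zero.2 (squeeze_zero' (Eventually.of_forall fun _ =>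
    norm_nonneg _) ?_ hbound)
  filter_upwards [eventually_gt_atTop 0] with T hT
  exact norm_integral_ofReal_rpow_mul_cexp_sub_le hs0 hs.le hz hz0 hT

theorem neg_mul_I_cpow_neg {b : ℝ} (hb : 0 < b) (s : ℝ) :
    (-(b * I)) ^ (-(s : ℂ)) = ((b ^ (-s) : ℝ) : ℂ) * cexp ((Real.pi * s / 2 : ℝ) * I) := by
  rw [show -((b : ℂ) * I) = b * -I by ring, cpow_def_of_ne_zero (by simp [hb.ne']),
    log_ofReal_mul hb (by simp), log_neg_I, Real.rpow_def_of_pos hb, ofReal_exp, ← exp_add]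
  congr 1
  push_cast
  ring

theorem tendsto_integral_cos_mul_rpow {s b : ℝ} (x : ℝ) (hs0 : 0 < s) (hs : s < 1) (hb : 0 < b) :
    Tendsto (fun T : ℝ => ∫ y in (0 : ℝ)..T, Real.cos (b * (x + y)) * y ^ (s - 1)) atTop
      (𝓝 (Real.Gamma s / b ^ s *
        (Real.cos (b * x) * Real.cos (Real.pi * s / 2) -
          Real.sin (b * x) * Real.sin (Real.pi * s / 2)))) := by
  have hre : 0 ≤ (-(b * I)).re := by simp
  have hne : -((b : ℂ) * I) ≠ 0 := by simp [hb.ne']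
  have hrot : ∀ y : ℝ, cexp ((b * x : ℝ) * I) * cexp (-(-(b * I) * y)) =
      cexp ((b * (x + y) : ℝ) * I) := fun y => by
    rw [← exp_add]; congr 1; push_cast; ring
  have hlim := (continuous_re.tendsto _).comp
    ((tendsto_integral_ofReal_rpow_mul_cexp hs0 hs hre hne).const_mul (cexp ((b * x : ℝ) * I)))
  have hval : (cexp ((b * x : ℝ) * I) * (Gamma s * (-(b * I)) ^ (-(s : ℂ)))).re =
      Real.Gamma s / b ^ s * (Real.cos (b * x) * Real.cos (Real.pi * s / 2) -
        Real.sin (b * x) * Real.sin (Real.pi * s / 2)) := by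
    have hpolar : cexp ((b * x : ℝ) * I) *
        (Real.Gamma s * ((b ^ (-s) : ℝ) * cexp ((Real.pi * s / 2 : ℝ) * I))) =
        (Real.Gamma s * b ^ (-s) : ℝ) * cexp ((b * x + Real.pi * s / 2 : ℝ) * I) := by
      rw [ofReal_add, add_mul, exp_add]; push_cast; ring
    rw [neg_mul_I_cpow_neg hb, Gamma_ofReal, hpolar, re_ofReal_mul, exp_ofReal_mul_I_re,
      Real.cos_add, Real.rpow_neg hb.le]
    ring
  rw [← hval]
  refine hlim.congr' ?_
  filter_upwards [eventually_ge_atTop 0] with T hT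
  have hint := intervalIntegrable_ofReal_rpow_mul_cexp hs0 hre hT
  rw [Function.comp_apply, ← intervalIntegral.integral_const_mul, ← reCLM_apply,
    ← reCLM.intervalIntegral_comp_comm (hint.const_mul _)]
  refine intervalIntegral.integral_congr fun y _ => ?_
  simp only [reCLM_apply]
  rw [mul_left_comm, hrot, re_ofReal_mul, exp_ofReal_mul_I_re, mul_comm]

/-- For `α ∈ (1,2)`, `b > 0` and `x ∈ ℝ`, the improper integral
`∫_0^∞ cos(b(x+y)) y^{1-α} dy` exists and equals
`(Γ(2-α)/b^{2-α}) (cos(bx) cos(π(2-α)/2) - sin(bx) sin(π(2-α)/2))`. -/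
theorem right_fractional_integral_cos (α b x : ℝ) (hα : α ∈ Set.Ioo (1 : ℝ) 2) (hb : 0 < b) :
    Tendsto (fun T : ℝ => ∫ y in (0 : ℝ)..T, Real.cos (b * (x + y)) * y ^ (1 - α)) atTop
      (𝓝 (Real.Gamma (2 - α) / b ^ (2 - α) *
        (Real.cos (b * x) * Real.cos (Real.pi * (2 - α) / 2) -
          Real.sin (b * x) * Real.sin (Real.pi * (2 - α) / 2)))) := by
  obtain ⟨hα1, hα2⟩ := hα
  have h := tendsto_integral_cos_mul_rpow x (s := 2 - α) (by linarith) (by linarith) hb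
  rwa [show 2 - α - 1 = 1 - α by ring] at h
end
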